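/- arXiv:1606.06469 — 8 statements merged into one kernel-verified Lean document; each statement's English description precedes it below -/
import Mathlib

section
/- Let X be a uniformly convex Banach space, let C be a nonempty closed convex subset of X, and let {x_n} be a bounded sequence in X. Define the type function τ : C → [0,∞) by τ(x) = limsup_{n→∞} ‖x_n − x‖. Then τ attains its infimum on C, i.e., there exists z ∈ C such that τ(z) = inf{τ(x) : x ∈ C}. -/
open Filter

/-- **Existence of a minimizer of a type function.**
Let `X` be a uniformly convex Banach space, `C` a nonempty closed convex subset of `X`,
and `x : ℕ → X` a bounded sequence.  The type function
`τ y = limsup_{n→∞} ‖x n - y‖` attains its infimum on `C`. -/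
theorem type_function_attains_inf
    {X : Type*} [NormedAddCommGroup X] [NormedSpace ℝ X] [CompleteSpace X]
    [UniformConvexSpace X]
    (C : Set X) (hCne : C.Nonempty) (hCcl : IsClosed C) (hCconv : Convex ℝ C)
    (x : ℕ → X) (hx : Bornology.IsBounded (Set.range x)) :
    ∃ z ∈ C,
      limsup (fun n => ‖x n - z‖) atTop
        = sInf ((fun y => limsup (fun n => ‖x n - y‖) atTop) '' C) := by
  obtain ⟨M, hM⟩ : ∃ M, ∀ n, ‖x n‖ ≤ M := by
    obtain ⟨M, hM⟩ := hx.exists_norm_le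
    exact ⟨M, fun n => hM _ (Set.mem_range_self n)⟩
  set τ : X → ℝ := fun y => limsup (fun n => ‖x n - y‖) atTop with hτdef
  have hbdd : ∀ y : X, IsBoundedUnder (· ≤ ·) atTop (fun n => ‖x n - y‖) := fun y =>
    isBoundedUnder_of ⟨M + ‖y‖, fun n => (norm_sub_le _ _).trans (by gcongr; exact hM n)⟩
  have hcobdd : ∀ y : X, IsCoboundedUnder (· ≤ ·) atTop (fun n => ‖x n - y‖) := fun y =>
    isCoboundedUnder_le_of_eventually_le atTop (x := 0)
      (Eventually.of_forall fun n => norm_nonneg _)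
  -- limsup ≤ c from eventual bound
  have h_le : ∀ (y : X) (c : ℝ), (∀ᶠ n in atTop, ‖x n - y‖ ≤ c) → τ y ≤ c := fun y c h =>
    limsup_le_of_le (hcobdd y) h
  -- eventual bound from limsup <
  have h_ev : ∀ (y : X) (c : ℝ), τ y < c → ∀ᶠ n in atTop, ‖x n - y‖ < c := fun y c h =>
    eventually_lt_of_limsup_lt h (hbdd y)
  have h_nonneg : ∀ y : X, 0 ≤ τ y := fun y =>
    le_limsup_of_frequently_le (Frequently.of_forall fun n => norm_nonneg _) (hbdd y)
  -- τ is 1-Lipschitz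
  have h_lip : ∀ a b : X, τ a ≤ τ b + ‖b - a‖ := by
    intro a b
    refine le_of_forall_pos_le_add fun η hη => ?_
    have h1 := h_ev b (τ b + η) (by linarith)
    refine h_le a _ (h1.mono fun n hn => ?_)
    calc ‖x n - a‖ ≤ ‖x n - b‖ + ‖b - a‖ := by
          simpa using norm_add_le (x n - b) (b - a)
      _ ≤ τ b + ‖b - a‖ + η := by linarith
  -- ‖a - b‖ ≤ τ a + τ b
  have h_tri : ∀ a b : X, ‖a - b‖ ≤ τ a + τ b := by
    intro a b
    refine le_of_forall_pos_le_add fun η hη => ?_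
    have h1 := h_ev a (τ a + η / 2) (by linarith)
    have h2 := h_ev b (τ b + η / 2) (by linarith)
    obtain ⟨n, hn1, hn2⟩ := (h1.and h2).exists
    calc ‖a - b‖ ≤ ‖x n - a‖ + ‖x n - b‖ := by
          have : a - b = (x n - b) - (x n - a) := by abel
          rw [this]
          exact (norm_sub_le _ _).trans (by rw [norm_sub_rev]; ring_nf; exact le_refl _)
      _ ≤ τ a + η / 2 + (τ b + η / 2) := by linarith
      _ = τ a + τ b + η := by ring
  set S : Set ℝ := (fun y => limsup (fun n => ‖x n - y‖) atTop) '' C with hSdef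
  have hS_ne : S.Nonempty := hCne.image _
  have hS_bdd : BddBelow S := ⟨0, by rintro t ⟨y, -, rfl⟩; exact h_nonneg y⟩
  set m : ℝ := sInf S with hmdef
  have hm_le : ∀ y ∈ C, m ≤ τ y := fun y hy => csInf_le hS_bdd ⟨y, hy, rfl⟩
  have hm0 : 0 ≤ m := le_csInf hS_ne (by rintro t ⟨y, -, rfl⟩; exact h_nonneg y)
  -- minimizing sequence
  have hmin : ∀ k : ℕ, ∃ y ∈ C, τ y < m + 1 / (k + 1) := by
    intro k
    have hpos : (0 : ℝ) < 1 / (k + 1) := by positivity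
    obtain ⟨t, ⟨y, hyC, rfl⟩, ht⟩ := exists_lt_of_csInf_lt hS_ne (lt_add_of_pos_right m hpos)
    exact ⟨y, hyC, ht⟩
  choose y hyC hyτ using hmin
  have hmono : ∀ p q : ℕ, p ≤ q → (1 : ℝ) / (q + 1) ≤ 1 / (p + 1) := fun p q h =>
    one_div_le_one_div_of_le (by positivity) (by exact_mod_cast Nat.succ_le_succ h)
  -- the minimizing sequence is Cauchy
  have hCauchy : CauchySeq y := by
    rw [Metric.cauchySeq_iff]
    intro ε hε
    rcases eq_or_lt_of_le hm0 with hm | hm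
    · -- m = 0
      obtain ⟨N, hN⟩ := exists_nat_one_div_lt (ε := ε / 2) (by linarith)
      refine ⟨N, fun j hj k hk => ?_⟩
      have hj' : τ (y j) < m + 1 / (N + 1) := (hyτ j).trans_le (by
        have := hmono N j hj; linarith)
      have hk' : τ (y k) < m + 1 / (N + 1) := (hyτ k).trans_le (by
        have := hmono N k hk; linarith)
      have := h_tri (y j) (y k)
      rw [dist_eq_norm]
      have : ‖y j - y k‖ < 2 * (m + 1 / (N + 1)) := by linarith
      rw [← hm] at this
      linarith
    · -- m > 0
      obtain ⟨δ₀, hδ₀, hδ⟩ := exists_forall_closed_ball_dist_add_le_two_sub X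
        (show (0:ℝ) < ε / (m + 1) by positivity)
      set δ : ℝ := min δ₀ 1 with hδdef
      have hδpos : 0 < δ := lt_min hδ₀ one_pos
      have hδ1 : δ ≤ 1 := min_le_right _ _
      set η : ℝ := min (m * δ / 4) 1 with hηdef
      have hηpos : 0 < η := lt_min (by positivity) one_pos
      have hη1 : η ≤ 1 := min_le_right _ _
      have hηδ : η ≤ m * δ / 4 := min_le_left _ _
      set r : ℝ := m + η with hrdef
      have hrpos : 0 < r := by positivity
      have hr1 : r ≤ m + 1 := by linarith
      obtain ⟨N, hN⟩ := exists_nat_one_div_lt hηpos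
      refine ⟨N, fun j hj k hk => ?_⟩
      rw [dist_eq_norm]
      by_contra hcon
      push_neg at hcon
      have hτj : τ (y j) < r := by
        have : (1 : ℝ) / (j + 1) ≤ 1 / (N + 1) := hmono N j hj
        have := hyτ j
        simp only [hrdef]
        linarith
      have hτk : τ (y k) < r := by
        have : (1 : ℝ) / (k + 1) ≤ 1 / (N + 1) := hmono N k hk
        have := hyτ k
        simp only [hrdef]
        linarith
      -- midpoint
      set w : X := (1 / 2 : ℝ) • (y j + y k) with hwdef
      have hwC : w ∈ C := by
        have := hCconv (hyC j) (hyC k) (by norm_num : (0:ℝ) ≤ 1/2)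
          (by norm_num : (0:ℝ) ≤ 1/2) (by norm_num)
        simpa [hwdef, smul_add, one_div] using this
      have hev : ∀ᶠ n in atTop, ‖x n - w‖ ≤ (1 - δ / 2) * r := by
        filter_upwards [h_ev (y j) r hτj, h_ev (y k) r hτk] with n hnj hnk
        set a : X := x n - y j with hadef
        set b : X := x n - y k with hbdef
        have hab : ε ≤ ‖a - b‖ := by
          have : a - b = y k - y j := by simp only [hadef, hbdef]; abel
          rw [this, norm_sub_rev]
          exact hcon
        have hu : ‖r⁻¹ • a‖ ≤ 1 := by
          rw [norm_smul, Real.norm_eq_abs, abs_of_pos (by positivity)]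
          rw [inv_mul_le_iff₀ hrpos, mul_one]
          exact hnj.le
        have hv : ‖r⁻¹ • b‖ ≤ 1 := by
          rw [norm_smul, Real.norm_eq_abs, abs_of_pos (by positivity)]
          rw [inv_mul_le_iff₀ hrpos, mul_one]
          exact hnk.le
        have huv : ε / (m + 1) ≤ ‖r⁻¹ • a - r⁻¹ • b‖ := by
          rw [← smul_sub, norm_smul, Real.norm_eq_abs, abs_of_pos (by positivity)]
          rw [div_le_iff₀ (by positivity)]
          calc ε ≤ ‖a - b‖ := hab
            _ = r⁻¹ * ‖a - b‖ * r := by field_simp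
            _ ≤ r⁻¹ * ‖a - b‖ * (m + 1) := by
                have h0 : 0 ≤ r⁻¹ * ‖a - b‖ := by positivity
                exact mul_le_mul_of_nonneg_left hr1 h0
        have hsum : ‖r⁻¹ • a + r⁻¹ • b‖ ≤ 2 - δ₀ := hδ hu hv huv
        have hsum' : ‖a + b‖ ≤ (2 - δ) * r := by
          have heq : ‖r⁻¹ • a + r⁻¹ • b‖ = r⁻¹ * ‖a + b‖ := by
            rw [← smul_add, norm_smul, Real.norm_eq_abs, abs_of_pos (by positivity)]
          rw [heq] at hsum
          have hδδ : δ ≤ δ₀ := min_le_left _ _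
          calc ‖a + b‖ ≤ r * (2 - δ) := (inv_mul_le_iff₀ hrpos).mp
                (hsum.trans (by linarith))
            _ = (2 - δ) * r := by ring
        have hxw : x n - w = (1 / 2 : ℝ) • (a + b) := by
          simp only [hwdef, hadef, hbdef]
          module
        rw [hxw, norm_smul, Real.norm_eq_abs]
        rw [abs_of_pos (by norm_num : (0:ℝ) < 1/2)]
        calc (1/2 : ℝ) * ‖a + b‖ ≤ (1/2) * ((2 - δ) * r) :=
              mul_le_mul_of_nonneg_left hsum' (by norm_num)
          _ = (1 - δ/2) * r := by ring
      have hτw : τ w ≤ (1 - δ / 2) * r := h_le w _ hev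
      have : m ≤ (1 - δ / 2) * r := (hm_le w hwC).trans hτw
      -- contradiction: (1 - δ/2)(m + η) < m
      have : (1 - δ / 2) * r < m := by
        simp only [hrdef]
        nlinarith
      linarith
  obtain ⟨z, hzC, hz⟩ := cauchySeq_tendsto_of_isComplete hCcl.isComplete hyC hCauchy
  refine ⟨z, hzC, le_antisymm ?_ (hm_le z hzC)⟩
  -- τ z ≤ m
  have hbound : ∀ k : ℕ, τ z ≤ m + 1 / (k + 1) + ‖y k - z‖ := fun k =>
    (h_lip z (y k)).trans (by linarith [hyτ k])
  have htend : Tendsto (fun k : ℕ => m + 1 / (k + 1) + ‖y k - z‖) atTop (nhds m) := by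
    have h1 : Tendsto (fun k : ℕ => 1 / ((k : ℝ) + 1)) atTop (nhds 0) :=
      tendsto_one_div_add_atTop_nhds_zero_nat
    have h2 : Tendsto (fun k : ℕ => ‖y k - z‖) atTop (nhds 0) :=
      tendsto_iff_norm_sub_tendsto_zero.mp hz
    have := (tendsto_const_nhds (x := m)).add (h1.add h2)
    simpa [add_assoc] using this
  exact ge_of_tendsto' htend hbound
end

section
/- Let X be a uniformly convex Banach space, let C be a nonempty closed convex subset of X, and let {x_n} be a bounded sequence in X with type function τ(x) = limsup_{n→∞} ‖x_n − x‖ on C. Let z ∈ C be a point with τ(z) = inf{τ(x) : x ∈ C} = τ₀. If {z_m} is any minimizing sequence in C, i.e., lim_{m→∞} τ(z_m) = τ₀, then {z_m} converges strongly (in norm) to z. -/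
open Filter

/-- Midpoint algebra helper. -/
lemma aux_midpoint_eq {X : Type*} [NormedAddCommGroup X] [NormedSpace ℝ X]
    (u p q : X) :
    u - ((1/2 : ℝ) • p + (1/2 : ℝ) • q) = (1/2 : ℝ) • ((u - p) + (u - q)) := by
  module

/-- Quantitative uniform-convexity estimate at radius `s ≤ r`. -/
lemma aux_unif_convex {X : Type*} [NormedAddCommGroup X] [NormedSpace ℝ X]
    {ε δ r s : ℝ} (_hε : 0 < ε) (hδ : 0 < δ) (hr : 0 < r)
    (hconv : ∀ ⦃u : X⦄, ‖u‖ ≤ 1 → ∀ ⦃v : X⦄, ‖v‖ ≤ 1 → ε / r ≤ ‖u - v‖ → ‖u + v‖ ≤ 2 - δ)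
    (hs : 0 < s) (hsr : s ≤ r) {a b : X} (ha : ‖a‖ ≤ s) (hb : ‖b‖ ≤ s)
    (hab : ε ≤ ‖a - b‖) : ‖a + b‖ ≤ 2 * s - ε * δ / 2 := by
  have hcnorm : ‖s⁻¹ • a‖ ≤ 1 := by
    rw [norm_smul, Real.norm_eq_abs, abs_of_pos (by positivity), inv_mul_le_iff₀ hs, mul_one]
    exact ha
  have hdnorm : ‖s⁻¹ • b‖ ≤ 1 := by
    rw [norm_smul, Real.norm_eq_abs, abs_of_pos (by positivity), inv_mul_le_iff₀ hs, mul_one]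
    exact hb
  have hcd : ε / r ≤ ‖s⁻¹ • a - s⁻¹ • b‖ := by
    rw [← smul_sub, norm_smul, Real.norm_eq_abs, abs_of_pos (by positivity), div_le_iff₀ hr]
    calc ε ≤ ‖a - b‖ := hab
      _ = s * (s⁻¹ * ‖a - b‖) := by field_simp
      _ ≤ r * (s⁻¹ * ‖a - b‖) := by
        have h0 : 0 ≤ s⁻¹ * ‖a - b‖ := by positivity
        nlinarith
      _ = s⁻¹ * ‖a - b‖ * r := by ring
  have hsum : ‖s⁻¹ • a + s⁻¹ • b‖ ≤ 2 - δ := hconv hcnorm hdnorm hcd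
  have heq : ‖a + b‖ = s * ‖s⁻¹ • a + s⁻¹ • b‖ := by
    rw [← smul_add, norm_smul, Real.norm_eq_abs, abs_of_pos (by positivity)]
    field_simp
  have hsε : ε / 2 ≤ s := by
    have h := hab.trans (norm_sub_le a b)
    linarith
  have h2δ : (0 : ℝ) ≤ 2 - δ := le_trans (norm_nonneg _) hsum
  rw [heq]
  nlinarith [mul_le_mul_of_nonneg_left hsum hs.le]

/-- **Minimizing sequences of a type function converge strongly to the minimizer.**
Let `X` be a uniformly convex Banach space, `C` a nonempty closed convex subset of `X`,
and `x : ℕ → X` a bounded sequence with type function `τ y = limsup_{n→∞} ‖x n - y‖` on `C`.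
If `z ∈ C` realizes the infimum `τ₀` of `τ` over `C` and `z_m` is a minimizing sequence in `C`
(i.e. `τ (z m) → τ₀`), then `z_m → z` in norm. -/
theorem minimizing_sequence_tendsto_min
    {X : Type*} [NormedAddCommGroup X] [NormedSpace ℝ X] [CompleteSpace X]
    [UniformConvexSpace X]
    (C : Set X) (hCne : C.Nonempty) (hCcl : IsClosed C) (hCconv : Convex ℝ C)
    (x : ℕ → X) (hx : Bornology.IsBounded (Set.range x))
    (τ₀ : ℝ)
    (hτ₀ : τ₀ = sInf ((fun y => limsup (fun n => ‖x n - y‖) atTop) '' C))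
    (z : X) (hz : z ∈ C)
    (hzmin : limsup (fun n => ‖x n - z‖) atTop = τ₀)
    (zs : ℕ → X) (hzs : ∀ m, zs m ∈ C)
    (hmin : Tendsto (fun m => limsup (fun n => ‖x n - zs m‖) atTop) atTop (nhds τ₀)) :
    Tendsto zs atTop (nhds z) := by
  obtain ⟨R, hR⟩ := isBounded_iff_forall_norm_le.1 hx
  have hbdd : ∀ y : X, IsBoundedUnder (· ≤ ·) atTop (fun n => ‖x n - y‖) := by
    intro y
    refine isBoundedUnder_of ⟨R + ‖y‖, fun n => ?_⟩
    calc ‖x n - y‖ ≤ ‖x n‖ + ‖y‖ := norm_sub_le _ _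
      _ ≤ R + ‖y‖ := by
        have := hR (x n) ⟨n, rfl⟩; linarith
  have hnonneg : ∀ y : X, 0 ≤ limsup (fun n => ‖x n - y‖) atTop := fun y =>
    le_limsup_of_frequently_le (Frequently.of_forall fun n => norm_nonneg _) (hbdd y)
  have hτ₀le : ∀ y ∈ C, τ₀ ≤ limsup (fun n => ‖x n - y‖) atTop := by
    intro y hy
    rw [hτ₀]
    exact csInf_le ⟨0, by rintro _ ⟨u, hu, rfl⟩; exact hnonneg u⟩ ⟨y, hy, rfl⟩
  have hτ₀0 : 0 ≤ τ₀ := hzmin ▸ hnonneg z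
  rw [Metric.tendsto_atTop]
  intro ε hε
  have hr : (0 : ℝ) < τ₀ + 1 := by linarith
  obtain ⟨δ, hδ, hconv2⟩ :=
    exists_forall_closed_ball_dist_add_le_two_sub X (div_pos hε hr)
  have hδ' : (0 : ℝ) < ε * δ / 4 := by positivity
  set η := min 1 (ε * δ / 8) with hηdef
  have hη : 0 < η := lt_min one_pos (by positivity)
  have hη1 : η ≤ 1 := min_le_left _ _
  have hηδ : η ≤ ε * δ / 8 := min_le_right _ _
  have hev : ∀ᶠ m in atTop,
      limsup (fun n => ‖x n - zs m‖) atTop < τ₀ + η :=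
    hmin.eventually_lt_const (by linarith)
  obtain ⟨N, hN⟩ := eventually_atTop.1 hev
  refine ⟨N, fun m hm => ?_⟩
  by_contra hcon
  push_neg at hcon
  have hs : (0 : ℝ) < τ₀ + η := by linarith
  have hsr : τ₀ + η ≤ τ₀ + 1 := by linarith
  have hwC : (1/2 : ℝ) • z + (1/2 : ℝ) • zs m ∈ C :=
    hCconv hz (hzs m) (by norm_num) (by norm_num) (by norm_num)
  have key : limsup (fun n => ‖x n - ((1/2 : ℝ) • z + (1/2 : ℝ) • zs m)‖) atTop
      ≤ (τ₀ + η) - ε * δ / 4 := by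
    have h1 : ∀ᶠ n in atTop, ‖x n - z‖ < τ₀ + η :=
      eventually_lt_of_limsup_lt (by rw [hzmin]; linarith) (hbdd z)
    have h2 : ∀ᶠ n in atTop, ‖x n - zs m‖ < τ₀ + η :=
      eventually_lt_of_limsup_lt (hN m hm) (hbdd (zs m))
    refine limsup_le_of_le
      (isCoboundedUnder_le_of_eventually_le atTop
        (Eventually.of_forall fun n => norm_nonneg _)) ?_
    filter_upwards [h1, h2] with n h1 h2
    have hab : ε ≤ ‖(x n - z) - (x n - zs m)‖ := by
      rw [show (x n - z) - (x n - zs m) = zs m - z by abel, ← dist_eq_norm]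
      exact hcon
    have hmain := aux_unif_convex hε hδ hr hconv2 hs hsr h1.le h2.le hab
    rw [aux_midpoint_eq, norm_smul, Real.norm_eq_abs,
      abs_of_pos (by norm_num : (0:ℝ) < 1/2)]
    linarith
  have hlow : τ₀ ≤ limsup (fun n => ‖x n - ((1/2 : ℝ) • z + (1/2 : ℝ) • zs m)‖) atTop :=
    hτ₀le _ hwC
  linarith
end

section
/- Let (X, ‖·‖, ⪯) be a partially ordered Banach space in which all order intervals [a,→) = {x ∈ X : a ⪯ x} and (←,b] = {x ∈ X : x ⪯ b} are convex and closed, and assume X is uniformly convex. Let C be a nonempty convex closed bounded subset of X not reduced to one point, and let T : C → C be a continuous monotone asymptotic nonexpansive mapping. Then T has a fixed point if and only if there exists x₀ ∈ C such that x₀ and T(x₀) are comparable (i.e., x₀ ⪯ T(x₀) or T(x₀) ⪯ x₀). -/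
/-!
If `x₀ ≤ T x₀`, the orbit `T^[n] x₀` increases, so the closed convex sets `C ∩ [T^[n] x₀, →)`
decrease; uniform convexity makes their intersection `K` nonempty, and monotonicity makes it
`T`-invariant. Every point of `K` lies above the whole orbit, so the asymptotic nonexpansiveness
applies between the orbit and `K`. In a uniformly convex space the function
`x ↦ limsup ‖T^[n] x₀ - x‖` has a minimizer `z` on `K` (an asymptotic center), and every
minimizing sequence converges to it. Since `T^[m]` multiplies this function at `z` by at most
`k m → 1`, the iterates `T^[m] z` form such a sequence, hence converge to `z`, and continuity makes
`z` a fixed point. The case `T x₀ ≤ x₀` is the same for the reversed order.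
-/
open Filter Topology Set Function

section UniformConvex

variable {E : Type*} [SeminormedAddCommGroup E] [NormedSpace ℝ E] [UniformConvexSpace E]

theorem exists_forall_norm_add_le_two_mul_sub_of_le {ε : ℝ} (hε : 0 < ε) (R : ℝ) :
    ∃ δ > 0, ∀ ⦃r : ℝ⦄, r ≤ R → ∀ ⦃x y : E⦄, ‖x‖ ≤ r → ‖y‖ ≤ r → ε ≤ ‖x - y‖ →
      ‖x + y‖ ≤ 2 * r - δ := by
  have hR : 0 < max R ε := lt_max_of_lt_right hε
  obtain ⟨δ, hδ, h⟩ := exists_forall_closed_ball_dist_add_le_two_sub E (div_pos hε hR)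
  refine ⟨δ * ε / 2, by positivity, fun r hr x y hx hy hxy => ?_⟩
  have hεr : ε ≤ 2 * r := by linarith [norm_sub_le x y]
  have hr0 : 0 < r := by linarith
  have hnorm : ∀ z : E, ‖r⁻¹ • z‖ = ‖z‖ / r := fun z => by
    rw [norm_smul_of_nonneg (inv_nonneg.2 hr0.le), inv_mul_eq_div]
  have hsum : ‖x + y‖ / r ≤ 2 - δ := by
    rw [← hnorm, smul_add]
    refine h ?_ ?_ ?_
    · rw [hnorm]; exact div_le_one_of_le₀ hx hr0.le
    · rw [hnorm]; exact div_le_one_of_le₀ hy hr0.le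
    · rw [← smul_sub, hnorm]
      exact div_le_div₀ (hε.le.trans hxy) hxy hr0 (hr.trans (le_max_left _ _))
  have : δ * ε / 2 ≤ δ * r := by nlinarith
  rw [div_le_iff₀ hr0] at hsum
  linarith

theorem exists_forall_dist_midpoint_le_sub {ε : ℝ} (hε : 0 < ε) (R : ℝ) :
    ∃ δ > 0, ∀ ⦃r : ℝ⦄, r ≤ R → ∀ ⦃c x y : E⦄, dist c x ≤ r → dist c y ≤ r → ε ≤ dist x y →
      dist c (midpoint ℝ x y) ≤ r - δ := by
  obtain ⟨δ, hδ, h⟩ := exists_forall_norm_add_le_two_mul_sub_of_le (E := E) hε R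
  refine ⟨δ / 2, half_pos hδ, fun r hr c x y hx hy hxy => ?_⟩
  have hmid : dist c (midpoint ℝ x y) = ‖(x - c) + (y - c)‖ / 2 := by
    have : midpoint ℝ x y - c = (2 : ℝ)⁻¹ • ((x - c) + (y - c)) := by
      rw [midpoint_eq_smul_add, invOf_eq_inv]; module
    rw [dist_comm, dist_eq_norm, this, norm_smul_of_nonneg (by norm_num), inv_mul_eq_div]
  rw [dist_comm, dist_eq_norm] at hx hy
  rw [dist_eq_norm, ← sub_sub_sub_cancel_right x y c] at hxy
  linarith [h hr hx hy hxy]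

theorem nonempty_iInter_of_antitone_of_convex [CompleteSpace E] {S : ℕ → Set E}
    (hS : Antitone S) (hne : ∀ n, (S n).Nonempty) (hcl : ∀ n, IsClosed (S n))
    (hconv : ∀ n, Convex ℝ (S n)) (hbdd : Bornology.IsBounded (S 0)) : (⋂ n, S n).Nonempty := by
  -- `S n` has a point of almost minimal norm; the minimal norms increase, and uniform convexity
  -- forces these almost minimizers to form a Cauchy sequence
  set r : ℕ → ℝ := fun n => Metric.infDist 0 (S n)
  have hr_mono : Monotone r := fun n m h => Metric.infDist_le_infDist_of_subset (hS h) (hne m)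
  have hr_bdd : BddAbove (range r) := by
    obtain ⟨M, hM⟩ := hbdd.exists_norm_le
    refine ⟨M, forall_mem_range.2 fun n => ?_⟩
    obtain ⟨x, hx⟩ := hne n
    exact (Metric.infDist_le_dist_of_mem hx).trans (by simpa using hM x (hS (Nat.zero_le n) hx))
  set R := ⨆ n, r n
  have hr_le (n : ℕ) : r n ≤ R := le_ciSup hr_bdd n
  have hy (n : ℕ) : ∃ y ∈ S n, ‖y‖ < R + 1 / (n + 1) := by
    obtain ⟨y, hy, hdist⟩ := (Metric.infDist_lt_iff (hne n)).1
      (show r n < R + 1 / (n + 1) by linarith [hr_le n, Nat.one_div_pos_of_nat (α := ℝ) (n := n)])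
    exact ⟨y, hy, by simpa using hdist⟩
  choose y hyS hy using hy
  have hy_cauchy : CauchySeq y := by
    refine Metric.cauchySeq_iff'.2 fun ε hε => ?_
    obtain ⟨δ, hδ, hmid⟩ := exists_forall_dist_midpoint_le_sub (E := E) hε (R + 1)
    obtain ⟨N, hrN, hN⟩ := ((tendsto_atTop_ciSup hr_mono hr_bdd).eventually_const_lt
      (by linarith : R - δ / 2 < R) |>.and <|
      tendsto_one_div_add_atTop_nhds_zero_nat.eventually_lt_const (half_pos hδ)).exists
    have hy_le (n : ℕ) (hn : N ≤ n) : dist 0 (y n) ≤ R + 1 / (N + 1) := by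
      rw [dist_zero_left]
      linarith [hy n, Nat.one_div_le_one_div (α := ℝ) hn]
    have hN1 : 1 / (N + 1 : ℝ) ≤ 1 := by simpa using Nat.one_div_le_one_div (α := ℝ) (Nat.zero_le N)
    refine ⟨N, fun n hn => lt_of_not_ge fun hεn => ?_⟩
    have hfar := hmid (by linarith) (hy_le n hn) (hy_le N le_rfl) hεn
    have hnear := Metric.infDist_le_dist_of_mem ((hconv N).midpoint_mem (hS hn (hyS n)) (hyS N))
      (x := 0)
    linarith
  obtain ⟨z, hz⟩ := cauchySeq_tendsto_of_complete hy_cauchy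
  exact ⟨z, mem_iInter.2 fun n => (hcl n).mem_of_tendsto hz
    (eventually_atTop.2 ⟨n, fun m hm => hS hm (hyS m)⟩)⟩

end UniformConvex

noncomputable def limsupDist {E : Type*} [PseudoMetricSpace E] (a : ℕ → E) (x : E) : ℝ :=
  limsup (fun n => dist (a n) x) atTop

section LimsupDist

variable {E : Type*} [PseudoMetricSpace E] {a : ℕ → E}

theorem isBoundedUnder_dist (ha : Bornology.IsBounded (range a)) (x : E) :
    IsBoundedUnder (· ≤ ·) atTop fun n => dist (a n) x := by
  obtain ⟨C, hC⟩ := Metric.isBounded_iff.1 (ha.insert x)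
  exact isBoundedUnder_of ⟨C, fun n => hC (mem_insert_of_mem x (mem_range_self n)) (mem_insert x _)⟩

theorem isCoboundedUnder_dist (a : ℕ → E) (x : E) :
    IsCoboundedUnder (· ≤ ·) atTop fun n => dist (a n) x :=
  isCoboundedUnder_le_of_le atTop fun _ => dist_nonneg

theorem limsupDist_nonneg (ha : Bornology.IsBounded (range a)) (x : E) : 0 ≤ limsupDist a x :=
  le_limsup_of_frequently_le (Frequently.of_forall fun _ => dist_nonneg) (isBoundedUnder_dist ha x)

theorem lipschitzWith_limsupDist (ha : Bornology.IsBounded (range a)) :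
    LipschitzWith 1 (limsupDist a) := LipschitzWith.of_le_add fun x y => by
  rw [limsupDist, limsupDist, ← limsup_add_const _ _ _ (isBoundedUnder_dist ha y)
    (isCoboundedUnder_dist a y)]
  refine limsup_le_limsup (Eventually.of_forall fun n => ?_) (isCoboundedUnder_dist a x)
    (isBoundedUnder_le_add (isBoundedUnder_dist ha y) isBoundedUnder_const)
  exact (dist_triangle _ _ _).trans_eq (by rw [dist_comm y])

theorem limsupDist_comp_add (a : ℕ → E) (m : ℕ) (x : E) :
    limsupDist (fun n => a (n + m)) x = limsupDist a x :=
  limsup_nat_add (fun n => dist (a n) x) m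

theorem limsupDist_le_mul (ha : Bornology.IsBounded (range a)) {b : ℕ → E} {c : ℝ} (hc : 0 ≤ c)
    {x y : E} (h : ∀ᶠ n in atTop, dist (b n) y ≤ c * dist (a n) x) :
    limsupDist b y ≤ c * limsupDist a x := by
  have hmono : Monotone (c * ·) := monotone_mul_left_of_nonneg hc
  rw [limsupDist, limsupDist, hmono.map_limsup_of_continuousAt _
    (continuous_const_mul c).continuousAt (isBoundedUnder_dist ha x) (isCoboundedUnder_dist a x)]
  exact limsup_le_limsup h (isCoboundedUnder_dist b y)
    (hmono.isBoundedUnder_le_comp (isBoundedUnder_dist ha x))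

end LimsupDist

section AsymptoticCenter

variable {E : Type*} [SeminormedAddCommGroup E] [NormedSpace ℝ E] [UniformConvexSpace E] {a : ℕ → E}

theorem exists_limsupDist_midpoint_le_sub (ha : Bornology.IsBounded (range a)) {ε : ℝ}
    (hε : 0 < ε) (R : ℝ) :
    ∃ δ > 0, ∀ ⦃ρ : ℝ⦄, ρ ≤ R → ∀ ⦃p q : E⦄, limsupDist a p < ρ → limsupDist a q < ρ →
      ε ≤ dist p q → limsupDist a (midpoint ℝ p q) ≤ ρ - δ := by
  obtain ⟨δ, hδ, h⟩ := exists_forall_dist_midpoint_le_sub (E := E) hε R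
  refine ⟨δ, hδ, fun ρ hρ p q hp hq hpq => limsup_le_of_le (isCoboundedUnder_dist _ _) ?_⟩
  filter_upwards [eventually_lt_of_limsup_lt hp (isBoundedUnder_dist ha p),
    eventually_lt_of_limsup_lt hq (isBoundedUnder_dist ha q)] with n hpn hqn
  exact h hρ hpn.le hqn.le hpq

theorem exists_forall_dist_lt_of_limsupDist_lt (ha : Bornology.IsBounded (range a)) {K : Set E}
    (hK : Convex ℝ K) {τ₀ : ℝ} (hτ₀ : ∀ x ∈ K, τ₀ ≤ limsupDist a x) {ε : ℝ} (hε : 0 < ε) :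
    ∃ θ > 0, ∀ p ∈ K, ∀ q ∈ K, limsupDist a p < τ₀ + θ → limsupDist a q < τ₀ + θ →
      dist p q < ε := by
  obtain ⟨δ, hδ, h⟩ := exists_limsupDist_midpoint_le_sub ha hε (τ₀ + 1)
  refine ⟨min (δ / 2) 1, by positivity, fun p hp q hq hpθ hqθ => lt_of_not_ge fun hpq => ?_⟩
  have hmid := h (by linarith [min_le_right (δ / 2) 1]) hpθ hqθ hpq
  linarith [hτ₀ _ (hK.midpoint_mem hp hq), min_le_left (δ / 2) 1]

theorem exists_isMinOn_limsupDist [CompleteSpace E] (ha : Bornology.IsBounded (range a))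
    {K : Set E} (hne : K.Nonempty) (hcl : IsClosed K) (hconv : Convex ℝ K) :
    ∃ z ∈ K, IsMinOn (limsupDist a) K z := by
  set τ := limsupDist a
  have hbdd : BddBelow (τ '' K) := ⟨0, forall_mem_image.2 fun x _ => limsupDist_nonneg ha x⟩
  have hlower : ∀ x ∈ K, sInf (τ '' K) ≤ τ x := fun x hx => csInf_le hbdd (mem_image_of_mem τ hx)
  obtain ⟨u, -, hu, hu_mem⟩ := exists_seq_tendsto_sInf (hne.image τ) hbdd
  choose w hwK hw using hu_mem
  have hw_tendsto : Tendsto (fun n => τ (w n)) atTop (𝓝 (sInf (τ '' K))) := by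
    simpa only [hw] using hu
  have hw_cauchy : CauchySeq w := Metric.cauchySeq_iff.2 fun ε hε => by
    obtain ⟨θ, hθ, hclose⟩ := exists_forall_dist_lt_of_limsupDist_lt ha hconv hlower hε
    obtain ⟨N, hN⟩ := eventually_atTop.1 (hw_tendsto.eventually_lt_const (lt_add_of_pos_right _ hθ))
    exact ⟨N, fun m hm n hn => hclose _ (hwK m) _ (hwK n) (hN m hm) (hN n hn)⟩
  obtain ⟨z, hz⟩ := cauchySeq_tendsto_of_complete hw_cauchy
  have hτz : τ z = sInf (τ '' K) :=
    tendsto_nhds_unique (((lipschitzWith_limsupDist ha).continuous.tendsto z).comp hz) hw_tendsto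
  exact ⟨z, hcl.mem_of_tendsto hz (Eventually.of_forall hwK), fun x hx => hτz ▸ hlower x hx⟩

theorem tendsto_of_tendsto_limsupDist (ha : Bornology.IsBounded (range a)) {K : Set E}
    (hconv : Convex ℝ K) {z : E} (hz : z ∈ K) (hmin : IsMinOn (limsupDist a) K z) {ι : Type*}
    {l : Filter ι} {w : ι → E} (hwK : ∀ᶠ i in l, w i ∈ K)
    (hw : Tendsto (fun i => limsupDist a (w i)) l (𝓝 (limsupDist a z))) :
    Tendsto w l (𝓝 z) := by
  refine Metric.tendsto_nhds.2 fun ε hε => ?_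
  obtain ⟨θ, hθ, hclose⟩ := exists_forall_dist_lt_of_limsupDist_lt ha hconv (fun x hx => hmin hx) hε
  filter_upwards [hwK, hw.eventually_lt_const (lt_add_of_pos_right _ hθ)] with i hwi hτi
  exact hclose _ hwi _ hz hτi (lt_add_of_pos_right _ hθ)

end AsymptoticCenter

theorem Set.MapsTo.isFixedPt_of_tendsto_iterate {α : Type*} [TopologicalSpace α] [T2Space α]
    {f : α → α} {s : Set α} {x y : α} (hf : MapsTo f s s) (hx : x ∈ s)
    (hy : Tendsto (fun n => f^[n] x) atTop (𝓝 y)) (hcont : ContinuousWithinAt f s y) :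
    IsFixedPt f y := by
  refine tendsto_nhds_unique ((tendsto_add_atTop_iff_nat 1).1 ?_) hy
  simp only [iterate_succ']
  exact hcont.tendsto.comp (tendsto_nhdsWithin_iff.2 ⟨hy, Eventually.of_forall (hf.iterate · hx)⟩)

theorem Set.MapsTo.rel_iterate {α : Type*} {r : α → α → Prop} {C : Set α} {T : α → α}
    (hTC : MapsTo T C C) (hT : ∀ x ∈ C, ∀ y ∈ C, r x y → r (T x) (T y)) (n : ℕ) :
    ∀ x ∈ C, ∀ y ∈ C, r x y → r (T^[n] x) (T^[n] y) := by
  induction n with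
  | zero => exact fun x _ y _ h => h
  | succ n ih =>
    intro x hx y hy h
    rw [iterate_succ_apply', iterate_succ_apply']
    exact hT _ (hTC.iterate n hx) _ (hTC.iterate n hy) (ih x hx y hy h)

section FixedPoint

variable {E : Type*} [NormedAddCommGroup E] [NormedSpace ℝ E] [CompleteSpace E]
  [UniformConvexSpace E] {C : Set E} {T : E → E} {x₀ : E}

theorem exists_mapsTo_subset_above_orbit {r : E → E → Prop} [Std.Refl r] [IsTrans E r]
    (hr : ∀ a, Convex ℝ {x | r a x} ∧ IsClosed {x | r a x}) (hCconv : Convex ℝ C)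
    (hCcl : IsClosed C) (hCbd : Bornology.IsBounded C) (hTC : MapsTo T C C)
    (hTmono : ∀ x ∈ C, ∀ y ∈ C, r x y → r (T x) (T y)) (hx₀ : x₀ ∈ C) (h : r x₀ (T x₀)) :
    ∃ K ⊆ C, K.Nonempty ∧ IsClosed K ∧ Convex ℝ K ∧ MapsTo T K K ∧
      ∀ x ∈ K, ∀ n, r (T^[n] x₀) x := by
  have horbit (n : ℕ) : r (T^[n] x₀) (T^[n + 1] x₀) := by
    rw [iterate_succ_apply]
    exact hTC.rel_iterate hTmono n _ hx₀ _ (hTC hx₀) h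
  set S : ℕ → Set E := fun n => C ∩ {x | r (T^[n] x₀) x}
  have hS_anti : Antitone S := fun n m hnm x hx =>
    ⟨hx.1, _root_.trans (Nat.rel_of_forall_rel_succ_of_le r horbit hnm) hx.2⟩
  refine ⟨⋂ n, S n, (iInter_subset S 0).trans inter_subset_left,
    nonempty_iInter_of_antitone_of_convex hS_anti (fun n => ⟨_, hTC.iterate n hx₀, refl _⟩)
      (fun n => hCcl.inter (hr _).2) (fun n => hCconv.inter (hr _).1)
      (hCbd.subset inter_subset_left),
    isClosed_iInter fun n => hCcl.inter (hr _).2, convex_iInter fun n => hCconv.inter (hr _).1,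
    fun x hx => ?_, fun x hx n => (mem_iInter.1 hx n).2⟩
  rw [mem_iInter] at hx ⊢
  intro n
  refine ⟨hTC (hx 0).1, ?_⟩
  cases n with
  | zero => exact _root_.trans h (hTmono _ hx₀ _ (hx 0).1 (hx 0).2)
  | succ n =>
    rw [iterate_succ_apply']
    exact hTmono _ (hTC.iterate n hx₀) _ (hx n).1 (hx n).2

theorem exists_tendsto_iterate_self {K : Set E} (hne : K.Nonempty) (hcl : IsClosed K)
    (hconv : Convex ℝ K) (hTK : MapsTo T K K)
    (hbdd : Bornology.IsBounded (range fun n => T^[n] x₀)) {k : ℕ → ℝ}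
    (hk : Tendsto k atTop (𝓝 1))
    (hT : ∀ m n, ∀ x ∈ K, dist (T^[m] (T^[n] x₀)) (T^[m] x) ≤ k m * dist (T^[n] x₀) x) :
    ∃ z ∈ K, Tendsto (fun m => T^[m] z) atTop (𝓝 z) := by
  set a : ℕ → E := fun n => T^[n] x₀
  obtain ⟨z, hzK, hmin⟩ := exists_isMinOn_limsupDist hbdd hne hcl hconv
  refine ⟨z, hzK, tendsto_of_tendsto_limsupDist hbdd hconv hzK hmin
    (Eventually.of_forall fun m => hTK.iterate m hzK) ?_⟩
  have hupper : ∀ᶠ m in atTop, limsupDist a (T^[m] z) ≤ k m * limsupDist a z := by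
    filter_upwards [hk.eventually_const_lt zero_lt_one] with m hm
    rw [← limsupDist_comp_add a m]
    refine limsupDist_le_mul hbdd hm.le (Eventually.of_forall fun n => ?_)
    simpa only [a, add_comm n m, iterate_add_apply] using hT m n z hzK
  exact tendsto_of_tendsto_of_tendsto_of_le_of_le' tendsto_const_nhds
    (by simpa using hk.mul_const (limsupDist a z))
    (Eventually.of_forall fun m => hmin (hTK.iterate m hzK)) hupper

theorem exists_isFixedPt_of_rel_apply {r : E → E → Prop} [Std.Refl r] [IsTrans E r]
    (hr : ∀ a, Convex ℝ {x | r a x} ∧ IsClosed {x | r a x}) (hCconv : Convex ℝ C)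
    (hCcl : IsClosed C) (hCbd : Bornology.IsBounded C) (hTC : MapsTo T C C)
    (hTcont : ContinuousOn T C) (hTmono : ∀ x ∈ C, ∀ y ∈ C, r x y → r (T x) (T y))
    {k : ℕ → ℝ} (hk : Tendsto k atTop (𝓝 1))
    (hTane : ∀ n : ℕ, ∀ x ∈ C, ∀ y ∈ C, r x y → ‖T^[n] x - T^[n] y‖ ≤ k n * ‖x - y‖)
    (hx₀ : x₀ ∈ C) (h : r x₀ (T x₀)) : ∃ z ∈ C, IsFixedPt T z := by
  obtain ⟨K, hKC, hKne, hKcl, hKconv, hTK, hK_above⟩ :=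
    exists_mapsTo_subset_above_orbit hr hCconv hCcl hCbd hTC hTmono hx₀ h
  obtain ⟨z, hzK, hz⟩ := exists_tendsto_iterate_self hKne hKcl hKconv hTK
    (hCbd.subset (range_subset_iff.2 fun n => hTC.iterate n hx₀)) hk fun m n x hx => by
      simpa only [dist_eq_norm] using
        hTane m _ (hTC.iterate n hx₀) x (hKC hx) (hK_above x hx n)
  exact ⟨z, hKC hzK, hTC.isFixedPt_of_tendsto_iterate (hKC hzK) hz (hTcont z (hKC hzK))⟩

end FixedPoint

theorem fixedPoint_monotone_asymptotic_nonexpansive_continuous_general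
    {X : Type*} [NormedAddCommGroup X] [NormedSpace ℝ X] [CompleteSpace X]
    [UniformConvexSpace X] [PartialOrder X]
    (hIccUp : ∀ a : X, Convex ℝ {x : X | a ≤ x} ∧ IsClosed {x : X | a ≤ x})
    (hIccDown : ∀ b : X, Convex ℝ {x : X | x ≤ b} ∧ IsClosed {x : X | x ≤ b})
    (C : Set X) (hCconv : Convex ℝ C) (hCcl : IsClosed C)
    (hCbd : Bornology.IsBounded C)
    (T : X → X) (hTC : Set.MapsTo T C C)
    (hTcont : ContinuousOn T C)
    (hTmono : ∀ x ∈ C, ∀ y ∈ C, x ≤ y → T x ≤ T y)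
    (k : ℕ → ℝ) (hklim : Tendsto k atTop (nhds 1))
    (hTane : ∀ n : ℕ, ∀ x ∈ C, ∀ y ∈ C, (x ≤ y ∨ y ≤ x) →
      ‖T^[n] x - T^[n] y‖ ≤ k n * ‖x - y‖) :
    (∃ z ∈ C, T z = z) ↔ (∃ x₀ ∈ C, x₀ ≤ T x₀ ∨ T x₀ ≤ x₀) := by
  refine ⟨fun ⟨z, hzC, hz⟩ => ⟨z, hzC, Or.inl hz.ge⟩, ?_⟩
  rintro ⟨x₀, hx₀, hup | hdown⟩
  · exact exists_isFixedPt_of_rel_apply (r := (· ≤ ·)) hIccUp hCconv hCcl hCbd hTC hTcont hTmono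
      hklim (fun n x hx y hy hxy => hTane n x hx y hy (Or.inl hxy)) hx₀ hup
  · exact exists_isFixedPt_of_rel_apply (r := (· ≥ ·)) hIccDown hCconv hCcl hCbd hTC hTcont
      (fun x hx y hy => hTmono y hy x hx) hklim
      (fun n x hx y hy hxy => hTane n x hx y hy (Or.inr hxy)) hx₀ hdown

/-- **Fixed point theorem for continuous monotone asymptotic nonexpansive mappings**
(Theorem 3.3 of the paper).  Let `X` be a uniformly convex Banach space endowed with a
partial order whose order intervals `[a,→)` and `(←,b]` are convex and closed, let `C` be a
nonempty convex closed bounded subset of `X` not reduced to one point, and let `T : C → C`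
be a continuous monotone asymptotic nonexpansive mapping.  Then `T` has a fixed point
if and only if there exists `x₀ ∈ C` comparable with `T x₀`. -/
theorem fixedPoint_monotone_asymptotic_nonexpansive_continuous
    {X : Type*} [NormedAddCommGroup X] [NormedSpace ℝ X] [CompleteSpace X]
    [UniformConvexSpace X] [PartialOrder X]
    (hIccUp : ∀ a : X, Convex ℝ {x : X | a ≤ x} ∧ IsClosed {x : X | a ≤ x})
    (hIccDown : ∀ b : X, Convex ℝ {x : X | x ≤ b} ∧ IsClosed {x : X | x ≤ b})
    (C : Set X) (hCne : C.Nonempty) (hCconv : Convex ℝ C) (hCcl : IsClosed C)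
    (hCbd : Bornology.IsBounded C) (hCnontriv : ∃ a ∈ C, ∃ b ∈ C, a ≠ b)
    (T : X → X) (hTC : Set.MapsTo T C C)
    (hTcont : ContinuousOn T C)
    (hTmono : ∀ x ∈ C, ∀ y ∈ C, x ≤ y → T x ≤ T y)
    (k : ℕ → ℝ) (hkpos : ∀ n, 0 < k n) (hklim : Tendsto k atTop (nhds 1))
    (hTane : ∀ n : ℕ, ∀ x ∈ C, ∀ y ∈ C, (x ≤ y ∨ y ≤ x) →
      ‖T^[n] x - T^[n] y‖ ≤ k n * ‖x - y‖) :
    (∃ z ∈ C, T z = z) ↔ (∃ x₀ ∈ C, x₀ ≤ T x₀ ∨ T x₀ ≤ x₀) :=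
  fixedPoint_monotone_asymptotic_nonexpansive_continuous_general hIccUp hIccDown C hCconv hCcl hCbd
    T hTC hTcont hTmono k hklim hTane
end

section
/- Every Banach lattice satisfies the monotone weak-Opial condition. Concretely: let (X, ‖·‖, ⪯) be a Banach lattice and let {x_n} be a monotone increasing sequence in X which converges weakly to x. Then for every y ∈ X with x ⪯ y, one has limsup_{n→∞} ‖x_n − x‖ ≤ limsup_{n→∞} ‖x_n − y‖. (Dually, if {x_n} is monotone decreasing with weak limit x and y ⪯ x, the same inequality holds.) -/
open Filter

/-- A sequence converges weakly to `p` iff `f (x n) → f p` for every continuous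
linear functional `f`. -/
def WeaklyConvergesTo {X : Type*} [NormedAddCommGroup X] [NormedSpace ℝ X]
    (x : ℕ → X) (p : X) : Prop :=
  ∀ f : X →L[ℝ] ℝ, Tendsto (fun n => f (x n)) atTop (nhds (f p))

/-!
Weak limits of monotone sequences are order bounds: a closed convex set is weakly closed
(Hahn–Banach), and the order intervals of a Banach lattice are closed and convex. Hence if
`x_n ↑ p` weakly and `p ≤ y`, then `x_n ≤ p ≤ y`, so `0 ≤ p - x_n ≤ y - x_n` and the
solid norm gives `‖x_n - p‖ ≤ ‖x_n - y‖` termwise. The decreasing case is the increasing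
one for `-x_n`.
-/

namespace WeaklyConvergesTo

variable {X : Type*} [NormedAddCommGroup X] [NormedSpace ℝ X] {x : ℕ → X} {p : X}

theorem neg (h : WeaklyConvergesTo x p) : WeaklyConvergesTo (-x) (-p) := fun f => by
  simpa only [Pi.neg_apply, map_neg] using (h f).neg

theorem mem_of_eventually_mem {s : Set X} (h : WeaklyConvergesTo x p) (hconv : Convex ℝ s)
    (hclosed : IsClosed s) (hmem : ∀ᶠ n in atTop, x n ∈ s) : p ∈ s := by
  by_contra hp
  obtain ⟨f, u, hfp, hfs⟩ := geometric_hahn_banach_point_closed hconv hclosed hp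
  have hu : ∀ᶠ n in atTop, u ≤ f (x n) := hmem.mono fun n hn => (hfs _ hn).le
  exact (ge_of_tendsto (h f) hu).not_gt hfp

theorem le_of_monotone [PartialOrder X] [IsOrderedAddMonoid X] [PosSMulMono ℝ X]
    [ClosedIciTopology X] (h : WeaklyConvergesTo x p) (hx : Monotone x) (m : ℕ) :
    x m ≤ p :=
  h.mem_of_eventually_mem (convex_Ici (x m)) isClosed_Ici
    (eventually_atTop.2 ⟨m, fun _ hn => hx hn⟩)

end WeaklyConvergesTo

section SolidNorm

variable {X : Type*} [NormedAddCommGroup X] [Lattice X] [HasSolidNorm X] [IsOrderedAddMonoid X]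

theorem norm_sub_le_norm_sub_of_le_of_le {a b c : X} (hab : a ≤ b) (hbc : b ≤ c) :
    ‖b - a‖ ≤ ‖c - a‖ :=
  norm_le_norm_of_abs_le_abs <| by
    rw [abs_of_nonneg (sub_nonneg.2 hab), abs_of_nonneg (sub_nonneg.2 (hab.trans hbc))]
    exact sub_le_sub_right hbc a

theorem norm_sub_le_norm_sub_of_le_of_le' {a b c : X} (hab : a ≤ b) (hbc : b ≤ c) :
    ‖c - b‖ ≤ ‖c - a‖ :=
  norm_le_norm_of_abs_le_abs <| by
    rw [abs_of_nonneg (sub_nonneg.2 hbc), abs_of_nonneg (sub_nonneg.2 (hab.trans hbc))]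
    exact sub_le_sub_left hab c

end SolidNorm

theorem limsup_norm_sub_le_of_monotone_of_weaklyConvergesTo
    {X : Type*} [NormedAddCommGroup X] [Lattice X] [HasSolidNorm X] [IsOrderedAddMonoid X]
    [NormedSpace ℝ X] [PosSMulMono ℝ X] {x : ℕ → X} {p y : X}
    (hweak : WeaklyConvergesTo x p) (hx : Monotone x) (hy : p ≤ y) :
    limsup (fun n => ‖x n - p‖) atTop ≤ limsup (fun n => ‖x n - y‖) atTop := by
  have hle : ∀ n, x n ≤ p := hweak.le_of_monotone hx
  have htermwise : ∀ n, ‖x n - p‖ ≤ ‖x n - y‖ := fun n => by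
    simpa only [norm_sub_rev (x n)] using norm_sub_le_norm_sub_of_le_of_le (hle n) hy
  have hbounded : ∀ n, ‖x n - y‖ ≤ ‖x 0 - y‖ := fun n => by
    simpa only [norm_sub_rev _ y] using
      norm_sub_le_norm_sub_of_le_of_le' (hx n.zero_le) ((hle n).trans hy)
  exact limsup_le_limsup (.of_forall htermwise)
    (isCoboundedUnder_le_of_le _ fun _ => norm_nonneg _) (isBoundedUnder_of ⟨_, hbounded⟩)

theorem banachLattice_monotone_weak_opial_general
    {X : Type*} [NormedAddCommGroup X] [Lattice X] [HasSolidNorm X] [IsOrderedAddMonoid X]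
    [NormedSpace ℝ X]
    [PosSMulStrictMono ℝ X]
    (x : ℕ → X) (p : X) (hweak : WeaklyConvergesTo x p) :
    ((∀ n, x n ≤ x (n + 1)) → ∀ y : X, p ≤ y →
      limsup (fun n => ‖x n - p‖) atTop ≤ limsup (fun n => ‖x n - y‖) atTop) ∧
    ((∀ n, x (n + 1) ≤ x n) → ∀ y : X, y ≤ p →
      limsup (fun n => ‖x n - p‖) atTop ≤ limsup (fun n => ‖x n - y‖) atTop) := by
  refine ⟨fun hinc y hy => ?_, fun hdec y hy => ?_⟩
  · exact limsup_norm_sub_le_of_monotone_of_weaklyConvergesTo hweak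
      (monotone_nat_of_le_succ hinc) hy
  · have := limsup_norm_sub_le_of_monotone_of_weaklyConvergesTo hweak.neg
      (antitone_nat_of_succ_le hdec).neg (neg_le_neg hy)
    simpa only [Pi.neg_apply, neg_sub_neg, norm_sub_rev] using this

/-- **Every Banach lattice satisfies the monotone weak-Opial condition**
(Proposition 3.6 of the paper).  Let `X` be a Banach lattice (a complete normed lattice
with solid norm and compatible scalar multiplication).  If `x_n` is a monotone increasing
sequence converging weakly to `x`, then for every `y` with `x ≤ y` one has
`limsup ‖x_n - x‖ ≤ limsup ‖x_n - y‖`; dually for monotone decreasing sequences and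
`y ≤ x`. -/
theorem banachLattice_monotone_weak_opial
    {X : Type*} [NormedAddCommGroup X] [Lattice X] [HasSolidNorm X] [IsOrderedAddMonoid X]
    [NormedSpace ℝ X] [CompleteSpace X]
    [PosSMulStrictMono ℝ X] [PosSMulReflectLT ℝ X]
    (x : ℕ → X) (p : X) (hweak : WeaklyConvergesTo x p) :
    ((∀ n, x n ≤ x (n + 1)) → ∀ y : X, p ≤ y →
      limsup (fun n => ‖x n - p‖) atTop ≤ limsup (fun n => ‖x n - y‖) atTop) ∧
    ((∀ n, x (n + 1) ≤ x n) → ∀ y : X, y ≤ p →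
      limsup (fun n => ‖x n - p‖) atTop ≤ limsup (fun n => ‖x n - y‖) atTop) :=
  banachLattice_monotone_weak_opial_general x p hweak
end

section
/- Let (X, ‖·‖, ⪯) be a partially ordered Banach space in which all order intervals [a,→) = {x ∈ X : a ⪯ x} and (←,b] = {x ∈ X : x ⪯ b} are convex and closed, and assume X is uniformly convex and satisfies the monotone weak-Opial condition. Let C be a nonempty convex closed bounded subset of X not reduced to one point, and let T : C → C be a monotone asymptotic nonexpansive mapping (not assumed continuous). Then T has a fixed point if and only if there exists x₀ ∈ C such that x₀ and T(x₀) are comparable (i.e., x₀ ⪯ T(x₀) or T(x₀) ⪯ x₀). -/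
open Filter

lemma ucPair {X : Type*} [NormedAddCommGroup X] [NormedSpace ℝ X] [UniformConvexSpace X]
    {d ε : ℝ} (hd : 0 ≤ d) (hε : 0 < ε) :
    ∃ η > 0, ∀ u y z : X, ‖u - y‖ ≤ d + η → ‖u - z‖ ≤ d + η → ε ≤ ‖y - z‖ →
      ‖u - (1/2 : ℝ) • (y + z)‖ ≤ d - η := by
  have hd1 : (0:ℝ) < d + 1 := by linarith
  obtain ⟨δ, hδ, H⟩ := exists_forall_closed_ball_dist_add_le_two_sub X (div_pos hε hd1)
  rcases hd.eq_or_lt with h0 | hdpos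
  · refine ⟨ε/3, by positivity, fun u y z h1 h2 h3 => ?_⟩
    exfalso
    have h4 : y - z = (u - z) - (u - y) := by abel
    have h5 : ‖y - z‖ ≤ ‖u - z‖ + ‖u - y‖ := h4 ▸ norm_sub_le _ _
    rw [← h0] at h1 h2
    linarith
  · refine ⟨min 1 (d*δ/4), by positivity, fun u y z h1 h2 h3 => ?_⟩
    set η := min 1 (d*δ/4) with hη
    have hη1 : η ≤ 1 := min_le_left _ _
    have hη2 : η ≤ d*δ/4 := min_le_right _ _
    have hη0 : 0 < η := by positivity
    set R := d + η with hRdef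
    have hR0 : 0 < R := by positivity
    have e1 : ‖R⁻¹ • (u - y)‖ = R⁻¹ * ‖u - y‖ := norm_smul_of_nonneg (inv_nonneg.2 hR0.le) _
    have e2 : ‖R⁻¹ • (u - z)‖ = R⁻¹ * ‖u - z‖ := norm_smul_of_nonneg (inv_nonneg.2 hR0.le) _
    have na : ‖R⁻¹ • (u - y)‖ ≤ 1 := by
      rw [e1, ← div_eq_inv_mul, div_le_one hR0]; exact h1
    have nb : ‖R⁻¹ • (u - z)‖ ≤ 1 := by
      rw [e2, ← div_eq_inv_mul, div_le_one hR0]; exact h2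
    have ediff : R⁻¹ • (u - y) - R⁻¹ • (u - z) = R⁻¹ • (z - y) := by
      rw [← smul_sub]; congr 1; abel
    have nd : ε / (d+1) ≤ ‖R⁻¹ • (u - y) - R⁻¹ • (u - z)‖ := by
      rw [ediff, norm_smul_of_nonneg (inv_nonneg.2 hR0.le), ← div_eq_inv_mul, norm_sub_rev]
      calc ε / (d+1) ≤ ε / R := by gcongr; linarith
        _ ≤ ‖y - z‖ / R := by gcongr
    have key := H na nb nd
    have esum : R⁻¹ • (u - y) + R⁻¹ • (u - z) = R⁻¹ • ((u - y) + (u - z)) := (smul_add _ _ _).symm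
    rw [esum, norm_smul_of_nonneg (inv_nonneg.2 hR0.le), ← div_eq_inv_mul] at key
    have hsum : ‖(u - y) + (u - z)‖ ≤ R * (2 - δ) := by
      rw [div_le_iff₀ hR0] at key; linarith [key]
    have emid : u - (1/2 : ℝ) • (y + z) = (1/2 : ℝ) • ((u - y) + (u - z)) := by
      module
    rw [emid, norm_smul_of_nonneg (by norm_num : (0:ℝ) ≤ 1/2)]
    nlinarith [norm_nonneg ((u - y) + (u - z)), hδ.le, hdpos.le]


lemma ucInt {X : Type*} [NormedAddCommGroup X] [NormedSpace ℝ X] [CompleteSpace X]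
    [UniformConvexSpace X] (G : Ultrafilter X) (C : Set X) (hCG : C ∈ G)
    (hCbd : Bornology.IsBounded C) (hCconv : Convex ℝ C) (hCcl : IsClosed C) :
    ∃ w : X, ∀ A : Set X, IsClosed A → Convex ℝ A → A ∈ G → w ∈ A := by
  classical
  set F : Set (Set X) := {A | A ∈ G ∧ IsClosed A ∧ Convex ℝ A ∧ A ⊆ C} with hF
  have hCF : C ∈ F := ⟨hCG, hCcl, hCconv, subset_rfl⟩
  have hne : ∀ A ∈ F, A.Nonempty := fun A hA => G.nonempty_of_mem hA.1
  obtain ⟨M, hM⟩ := hCbd.subset_closedBall (0 : X)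
  set dA : Set X → ℝ := fun A => Metric.infDist 0 A with hdA
  set s : Set ℝ := dA '' F with hs
  have hsne : s.Nonempty := ⟨dA C, C, hCF, rfl⟩
  have hbdd : BddAbove s := by
    refine ⟨M, ?_⟩; rintro v ⟨A, hA, rfl⟩
    obtain ⟨a, ha⟩ := hne A hA
    refine le_trans (Metric.infDist_le_dist_of_mem ha) ?_
    have := hM (hA.2.2.2 ha)
    simpa [dist_comm] using this
  set d : ℝ := sSup s with hd
  have hdle : ∀ A ∈ F, dA A ≤ d := fun A hA => le_csSup hbdd ⟨A, hA, rfl⟩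
  have hd0 : 0 ≤ d := le_trans Metric.infDist_nonneg (hdle C hCF)
  have hch : ∀ i : ℕ, ∃ A ∈ F, d - 1/(i+1) < dA A := by
    intro i
    have h1 : d - 1/((i:ℝ)+1) < d := by
      have : (0:ℝ) < 1/((i:ℝ)+1) := by positivity
      linarith
    obtain ⟨v, ⟨A, hA, rfl⟩, hv⟩ := exists_lt_of_lt_csSup hsne h1
    exact ⟨A, hA, hv⟩
  choose A hAF hAd using hch
  set B : ℕ → Set X := fun i => C ∩ ⋂ j ∈ Finset.range (i+1), A j with hB
  have hBF : ∀ i, B i ∈ F := by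
    intro i
    refine ⟨?_, ?_, ?_, Set.inter_subset_left⟩
    · exact Filter.inter_mem hCG ((Filter.biInter_finset_mem _).2 fun j _ => (hAF j).1)
    · exact hCcl.inter (isClosed_biInter fun j _ => (hAF j).2.1)
    · exact hCconv.inter (convex_iInter₂ fun j _ => (hAF j).2.2.1)
  have hBmono : ∀ i j, i ≤ j → B j ⊆ B i := by
    intro i j hij
    refine Set.inter_subset_inter_right _ ?_
    intro a ha
    simp only [Set.mem_iInter, Finset.mem_range] at ha ⊢
    exact fun l hl => ha l (by omega)
  have hBsubA : ∀ i, B i ⊆ A i := fun i =>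
    Set.inter_subset_right.trans (Set.biInter_subset_of_mem (Finset.self_mem_range_succ i))
  have hBd : ∀ i, d - 1/(i+1) < dA (B i) :=
    fun i => lt_of_lt_of_le (hAd i)
      (Metric.infDist_le_infDist_of_subset (hBsubA i) (hne _ (hBF i)))
  have hz : ∀ A' ∈ F, ∀ i : ℕ, ∃ p ∈ A' ∩ B i, dist 0 p < d + 1/(i+1) := by
    intro A' hA' i
    have hABF : A' ∩ B i ∈ F :=
      ⟨Filter.inter_mem hA'.1 (hBF i).1, hA'.2.1.inter (hBF i).2.1,
        hA'.2.2.1.inter (hBF i).2.2.1, Set.inter_subset_right.trans (hBF i).2.2.2⟩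
    have h1 : dA (A' ∩ B i) < d + 1/(i+1) := by
      have : (0:ℝ) < 1/((i:ℝ)+1) := by positivity
      have := hdle _ hABF; linarith
    rw [hdA, Metric.infDist_lt_iff (hne _ hABF)] at h1
    obtain ⟨p, hp, hpd⟩ := h1
    exact ⟨p, hp, hpd⟩
  have pair : ∀ ε : ℝ, 0 < ε → ∃ N : ℕ, ∀ i, N ≤ i → ∀ p q : X, p ∈ B i → q ∈ B i →
      dist 0 p ≤ d + 1/(i+1) → dist 0 q ≤ d + 1/(i+1) → dist p q < ε := by
    intro ε hε
    obtain ⟨η, hη0, hP⟩ := ucPair (X := X) hd0 hε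
    obtain ⟨N, hN⟩ := exists_nat_one_div_lt hη0
    refine ⟨N, fun i hi p q hp hq hdp hdq => ?_⟩
    by_contra hcon
    push_neg at hcon
    have h1i : 1/((i:ℝ)+1) ≤ 1/((N:ℝ)+1) :=
      one_div_le_one_div_of_le (by positivity) (by exact_mod_cast Nat.succ_le_succ hi)
    have h1iη : 1/((i:ℝ)+1) < η := lt_of_le_of_lt h1i hN
    have hup : ‖(0:X) - p‖ ≤ d + η := by
      rw [← dist_eq_norm]; linarith
    have huq : ‖(0:X) - q‖ ≤ d + η := by
      rw [← dist_eq_norm]; linarith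
    have hpq : ε ≤ ‖p - q‖ := by rw [← dist_eq_norm]; exact hcon
    have hmid := hP 0 p q hup huq hpq
    have hmem : (1/2:ℝ) • (p + q) ∈ B i := by
      have := (hBF i).2.2.1 hp hq (by norm_num : (0:ℝ) ≤ 1/2) (by norm_num : (0:ℝ) ≤ 1/2)
        (by norm_num : (1:ℝ)/2 + 1/2 = 1)
      simpa [smul_add] using this
    have hlow : dA (B i) ≤ dist 0 ((1/2:ℝ) • (p + q)) := Metric.infDist_le_dist_of_mem hmem
    rw [dist_eq_norm] at hlow
    have := hBd i
    linarith
  have hy : ∀ i : ℕ, ∃ p ∈ B i, dist 0 p < d + 1/(i+1) := by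
    intro i
    obtain ⟨p, hp, hpd⟩ := hz C hCF i
    exact ⟨p, hp.2, hpd⟩
  choose y hyB hyd using hy
  have hcauchy : CauchySeq y := by
    rw [Metric.cauchySeq_iff]
    intro ε hε
    obtain ⟨N, hN⟩ := pair ε hε
    refine ⟨N, fun i hi j hj => ?_⟩
    have hm : N ≤ min i j := le_min hi hj
    have h1 : 1/((i:ℝ)+1) ≤ 1/((min i j:ℕ)+1 : ℝ) :=
      one_div_le_one_div_of_le (by positivity)
        (by exact_mod_cast Nat.succ_le_succ (min_le_left i j))
    have h2 : 1/((j:ℝ)+1) ≤ 1/((min i j:ℕ)+1 : ℝ) :=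
      one_div_le_one_div_of_le (by positivity)
        (by exact_mod_cast Nat.succ_le_succ (min_le_right i j))
    exact hN (min i j) hm (y i) (y j) (hBmono _ _ (min_le_left i j) (hyB i))
      (hBmono _ _ (min_le_right i j) (hyB j))
      (by linarith [hyd i]) (by linarith [hyd j])
  obtain ⟨w, hw⟩ := cauchySeq_tendsto_of_complete hcauchy
  refine ⟨w, fun A' hAcl hAconv hAG => ?_⟩
  have hAF' : A' ∩ C ∈ F :=
    ⟨Filter.inter_mem hAG hCG, hAcl.inter hCcl, hAconv.inter hCconv, Set.inter_subset_right⟩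
  choose z hzmem hzd using hz (A' ∩ C) hAF'
  have htend : Tendsto z atTop (nhds w) := by
    rw [Metric.tendsto_atTop]
    intro ε hε
    obtain ⟨N1, hN1⟩ := pair (ε/2) (half_pos hε)
    obtain ⟨N2, hN2⟩ := (Metric.tendsto_atTop).1 hw (ε/2) (half_pos hε)
    refine ⟨max N1 N2, fun n hn => ?_⟩
    have h1 : dist (z n) (y n) < ε/2 :=
      hN1 n (le_trans (le_max_left _ _) hn) (z n) (y n) (hzmem n).2 (hyB n)
        (le_of_lt (hzd n)) (le_of_lt (hyd n))
    calc dist (z n) w ≤ dist (z n) (y n) + dist (y n) w := dist_triangle _ _ _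
      _ < ε/2 + ε/2 := add_lt_add h1 (hN2 n (le_trans (le_max_right _ _) hn))
      _ = ε := add_halves ε
  have hwm : w ∈ A' ∩ C :=
    (hAcl.inter hCcl).mem_of_tendsto htend (Eventually.of_forall fun n => (hzmem n).1)
  exact hwm.1


set_option maxHeartbeats 2000000 in
lemma keyLemma {X : Type*} [NormedAddCommGroup X] [NormedSpace ℝ X] [CompleteSpace X]
    [UniformConvexSpace X]
    (r : X → X → Prop) (hrefl : ∀ a, r a a)
    (htrans : ∀ a b c, r a b → r b c → r a c)
    (hanti : ∀ a b, r a b → r b a → a = b)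
    (hUp : ∀ a : X, Convex ℝ {x | r a x} ∧ IsClosed {x | r a x})
    (hDown : ∀ b : X, Convex ℝ {x | r x b} ∧ IsClosed {x | r x b})
    (hOp : ∀ (x : ℕ → X) (p : X), (∀ n, r (x n) (x (n + 1))) → WeaklyConvergesTo x p →
      ∀ y : X, r p y → limsup (fun n => ‖x n - p‖) atTop ≤ limsup (fun n => ‖x n - y‖) atTop)
    (C : Set X) (hCconv : Convex ℝ C) (hCcl : IsClosed C) (hCbd : Bornology.IsBounded C)
    (T : X → X) (hTC : Set.MapsTo T C C)
    (hTmono : ∀ a ∈ C, ∀ b ∈ C, r a b → r (T a) (T b))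
    (k : ℕ → ℝ) (hkpos : ∀ n, 0 < k n) (hklim : Tendsto k atTop (nhds 1))
    (hTane : ∀ n : ℕ, ∀ a ∈ C, ∀ b ∈ C, r a b → ‖T^[n] a - T^[n] b‖ ≤ k n * ‖a - b‖)
    (x₀ : X) (hx₀ : x₀ ∈ C) (hcomp : r x₀ (T x₀)) :
    ∃ z ∈ C, T z = z := by
  classical
  set x : ℕ → X := fun n => T^[n] x₀ with hxdef
  have hxC : ∀ n, x n ∈ C := fun n => hTC.iterate n hx₀
  have hxsucc : ∀ n, x (n+1) = T (x n) := fun n => Function.iterate_succ_apply' T n x₀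
  have hxmono : ∀ n, r (x n) (x (n+1)) := by
    intro n
    induction n with
    | zero => rw [hxsucc 0]; exact hcomp
    | succ n ih =>
      have h := hTmono _ (hxC n) _ (hxC (n+1)) ih
      rw [← hxsucc n, ← hxsucc (n+1)] at h
      exact h
  have hxle : ∀ m n, m ≤ n → r (x m) (x n) := by
    intro m n hmn
    induction n with
    | zero => obtain rfl := Nat.le_zero.1 hmn; exact hrefl _
    | succ n ih =>
      rcases Nat.lt_or_ge m (n+1) with h | h
      · exact htrans _ _ _ (ih (Nat.lt_succ_iff.1 h)) (hxmono n)
      · obtain rfl : m = n + 1 := le_antisymm hmn h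
        exact hrefl _
  have main : ∀ V : Ultrafilter ℕ, (V : Filter ℕ) ≤ atTop →
      ∃ w ∈ C, (∀ n, r (x n) w) ∧
        ∀ A : Set X, IsClosed A → Convex ℝ A → A ∈ V.map x → w ∈ A := by
    intro V hV
    have hCmem : C ∈ V.map x :=
      Ultrafilter.mem_map.2 (by
        have : x ⁻¹' C = Set.univ := Set.eq_univ_of_forall hxC
        rw [this]; exact Filter.univ_mem)
    obtain ⟨w, hw⟩ := ucInt (V.map x) C hCmem hCbd hCconv hCcl
    have hwC : w ∈ C := hw C hCcl hCconv hCmem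
    have hwub : ∀ n, r (x n) w := by
      intro n
      refine hw _ (hUp (x n)).2 (hUp (x n)).1 (Ultrafilter.mem_map.2 ?_)
      exact Filter.mem_of_superset (hV (mem_atTop n)) (fun m hm => hxle n m hm)
    exact ⟨w, hwC, hwub, hw⟩
  obtain ⟨w, hwC, hwub, hwA⟩ := main (Ultrafilter.of atTop) (Ultrafilter.of_le atTop)
  have hweak : WeaklyConvergesTo x w := by
    intro f
    rw [tendsto_iff_ultrafilter]
    intro V hV
    obtain ⟨w', hw'C, hw'ub, hw'A⟩ := main V hV
    have hww' : w' = w := by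
      have h1 : r w' w :=
        hw'A {y | r y w} (hDown w).2 (hDown w).1
          (Ultrafilter.mem_map.2 (Filter.mem_of_superset Filter.univ_mem fun m _ => hwub m))
      have h2 : r w w' :=
        hwA {y | r y w'} (hDown w').2 (hDown w').1
          (Ultrafilter.mem_map.2 (Filter.mem_of_superset Filter.univ_mem fun m _ => hw'ub m))
      exact hanti _ _ h1 h2
    rw [Metric.tendsto_nhds]
    intro ε hε
    have hS : {n : ℕ | |f (x n) - f w| ≤ ε/2} ∈ (V : Filter ℕ) := by
      by_contra hcon
      have hcompl : {n : ℕ | |f (x n) - f w| ≤ ε/2}ᶜ ∈ V :=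
        Ultrafilter.compl_mem_iff_notMem.2 hcon
      have hsub : {n : ℕ | |f (x n) - f w| ≤ ε/2}ᶜ ⊆
          {n : ℕ | f w + ε/2 ≤ f (x n)} ∪ {n : ℕ | f (x n) ≤ f w - ε/2} := by
        intro n hn
        simp only [Set.mem_compl_iff, Set.mem_setOf_eq, not_le] at hn
        rcases lt_abs.1 hn with h | h
        · exact Or.inl (by simp only [Set.mem_setOf_eq]; linarith)
        · exact Or.inr (by simp only [Set.mem_setOf_eq]; linarith)
      have hU : {n : ℕ | f w + ε/2 ≤ f (x n)} ∪ {n : ℕ | f (x n) ≤ f w - ε/2} ∈ V :=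
        Filter.mem_of_superset hcompl hsub
      rcases Ultrafilter.union_mem_iff.1 hU with h | h
      · have hwS : w' ∈ {y : X | f w + ε/2 ≤ f y} := by
          refine hw'A _ (isClosed_le continuous_const f.continuous) ?_ (Ultrafilter.mem_map.2 h)
          intro a ha b hb s t hs ht hst
          simp only [Set.mem_setOf_eq, map_add, map_smul, smul_eq_mul] at *
          have h1 : s * (f w + ε/2) ≤ s * f a := mul_le_mul_of_nonneg_left ha hs
          have h2 : t * (f w + ε/2) ≤ t * f b := mul_le_mul_of_nonneg_left hb ht
          have h3 : s * (f w + ε/2) + t * (f w + ε/2) = f w + ε/2 := by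
            rw [← add_mul, hst, one_mul]
          linarith
        rw [hww'] at hwS
        simp only [Set.mem_setOf_eq] at hwS
        linarith
      · have hwS : w' ∈ {y : X | f y ≤ f w - ε/2} := by
          refine hw'A _ (isClosed_le f.continuous continuous_const) ?_ (Ultrafilter.mem_map.2 h)
          intro a ha b hb s t hs ht hst
          simp only [Set.mem_setOf_eq, map_add, map_smul, smul_eq_mul] at *
          have h1 : s * f a ≤ s * (f w - ε/2) := mul_le_mul_of_nonneg_left ha hs
          have h2 : t * f b ≤ t * (f w - ε/2) := mul_le_mul_of_nonneg_left hb ht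
          have h3 : s * (f w - ε/2) + t * (f w - ε/2) = f w - ε/2 := by
            rw [← add_mul, hst, one_mul]
          linarith
        rw [hww'] at hwS
        simp only [Set.mem_setOf_eq] at hwS
        linarith
    filter_upwards [hS] with n hn
    rw [Real.dist_eq]
    calc |f (x n) - f w| ≤ ε/2 := hn
      _ < ε := by linarith
  have hxTw : ∀ m, r (x m) (T w) := by
    intro m
    cases m with
    | zero =>
      refine htrans _ _ _ (hxmono 0) ?_
      rw [hxsucc 0]
      exact hTmono _ (hxC 0) _ hwC (hwub 0)
    | succ m =>
      rw [hxsucc m]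
      exact hTmono _ (hxC m) _ hwC (hwub m)
  have hwTw : r w (T w) :=
    hwA {y | r y (T w)} (hDown (T w)).2 (hDown (T w)).1
      (Ultrafilter.mem_map.2 (Filter.mem_of_superset Filter.univ_mem fun m _ => hxTw m))
  set q : ℕ → X := fun m => T^[m] w with hqdef
  have hqC : ∀ m, q m ∈ C := fun m => hTC.iterate m hwC
  have hqsucc : ∀ m, q (m+1) = T (q m) := fun m => Function.iterate_succ_apply' T m w
  have hqmono : ∀ m, r (q m) (q (m+1)) := by
    intro m
    induction m with
    | zero => rw [hqsucc 0]; exact hwTw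
    | succ m ih =>
      have h := hTmono _ (hqC m) _ (hqC (m+1)) ih
      rw [← hqsucc m, ← hqsucc (m+1)] at h
      exact h
  have hwq : ∀ m, r w (q m) := by
    intro m
    induction m with
    | zero => exact hrefl w
    | succ m ih => exact htrans _ _ _ ih (hqmono m)
  obtain ⟨M, hM⟩ := Metric.isBounded_iff.1 hCbd
  have hMn : ∀ y ∈ C, ∀ n, ‖x n - y‖ ≤ M := fun y hy n => by
    rw [← dist_eq_norm]; exact hM (hxC n) hy
  have hbd : ∀ y ∈ C, IsBoundedUnder (· ≤ ·) atTop (fun n => ‖x n - y‖) :=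
    fun y hy => isBoundedUnder_of ⟨M, hMn y hy⟩
  have hcob : ∀ y : X, IsCoboundedUnder (· ≤ ·) atTop (fun n => ‖x n - y‖) := fun y =>
    IsBoundedUnder.isCoboundedUnder_le (isBoundedUnder_of ⟨0, fun n => norm_nonneg _⟩)
  set φ : X → ℝ := fun y => limsup (fun n => ‖x n - y‖) atTop with hφ
  set ρ : ℝ := limsup (fun n => ‖x n - w‖) atTop with hρdef
  have hρ0 : 0 ≤ ρ :=
    le_limsup_of_frequently_le (Frequently.of_forall (fun n => norm_nonneg (x n - w)))
      (hbd w hwC)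
  have hshift : ∀ (y : X) (m : ℕ),
      limsup (fun n => ‖x (n + m) - y‖) atTop = limsup (fun n => ‖x n - y‖) atTop :=
    fun y m => limsup_nat_add (fun n => ‖x n - y‖) m
  have hφq : ∀ m, limsup (fun n => ‖x n - q m‖) atTop ≤ k m * ρ := by
    intro m
    have h1 : ∀ n, ‖x (n + m) - q m‖ ≤ k m * ‖x n - w‖ := by
      intro n
      have hx' : x (n + m) = T^[m] (x n) := by
        simp only [hxdef]
        rw [add_comm, Function.iterate_add_apply]
      rw [hx']
      exact hTane m (x n) (hxC n) w hwC (hwub n)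
    have h2 : limsup (fun n => ‖x (n + m) - q m‖) atTop ≤
        limsup (fun n => k m * ‖x n - w‖) atTop := by
      refine limsup_le_limsup (Eventually.of_forall h1) ?_ ?_
      · exact IsBoundedUnder.isCoboundedUnder_le
          (isBoundedUnder_of ⟨0, fun n => norm_nonneg (x (n + m) - q m)⟩)
      · exact isBoundedUnder_of ⟨k m * M, fun n =>
          mul_le_mul_of_nonneg_left (hMn w hwC n) (hkpos m).le⟩
    rw [hshift (q m) m] at h2
    refine le_trans h2 (le_of_forall_pos_le_add ?_)
    intro ε hε
    have hlt : limsup (fun n => ‖x n - w‖) atTop < ρ + ε / k m := by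
      have h0 : (0:ℝ) < ε / k m := div_pos hε (hkpos m)
      rw [← hρdef]
      linarith
    have hev := eventually_lt_of_limsup_lt hlt (hbd w hwC)
    refine limsup_le_of_le
      (IsBoundedUnder.isCoboundedUnder_le (isBoundedUnder_of
        ⟨0, fun n => mul_nonneg (hkpos m).le (norm_nonneg (x n - w))⟩)) ?_
    filter_upwards [hev] with n hn
    have h3 := mul_le_mul_of_nonneg_left hn.le (hkpos m).le
    rw [mul_add, mul_div_cancel₀ _ (hkpos m).ne'] at h3
    exact h3
  have hρq : ∀ m, ρ ≤ limsup (fun n => ‖x n - q m‖) atTop := by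
    intro m
    have h := hOp x w hxmono hweak (q m) (hwq m)
    rw [← hρdef] at h
    exact h
  have hqlim : Tendsto q atTop (nhds w) := by
    rw [Metric.tendsto_atTop]
    intro ε hε
    obtain ⟨η, hη0, hP⟩ := ucPair (X := X) hρ0 hε
    have hkρ : Tendsto (fun m => k m * ρ) atTop (nhds ρ) := by
      simpa using hklim.mul_const ρ
    have hev : ∀ᶠ m in atTop, k m * ρ < ρ + η :=
      hkρ.eventually_lt_const (by linarith : ρ < ρ + η)
    obtain ⟨N, hN⟩ := eventually_atTop.1 hev
    refine ⟨N, fun m hm => ?_⟩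
    by_contra hcon
    push_neg at hcon
    set mid := (1/2:ℝ) • (q m + w) with hmid
    have hrmid : r w mid := by
      have h := (hUp w).1 (hwq m) (hrefl w) (by norm_num : (0:ℝ) ≤ 1/2)
        (by norm_num : (0:ℝ) ≤ 1/2) (by norm_num : (1:ℝ)/2 + 1/2 = 1)
      simpa [hmid, smul_add] using h
    have hρmid : ρ ≤ limsup (fun n => ‖x n - mid‖) atTop := by
      have h := hOp x w hxmono hweak mid hrmid
      rw [← hρdef] at h
      exact h
    have hev1 : ∀ᶠ n in atTop, ‖x n - q m‖ < ρ + η :=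
      eventually_lt_of_limsup_lt (lt_of_le_of_lt (hφq m) (hN m hm)) (hbd (q m) (hqC m))
    have hev2 : ∀ᶠ n in atTop, ‖x n - w‖ < ρ + η := by
      refine eventually_lt_of_limsup_lt ?_ (hbd w hwC)
      rw [← hρdef]
      linarith
    have hev3 : ∀ᶠ n in atTop, ‖x n - mid‖ ≤ ρ - η := by
      filter_upwards [hev1, hev2] with n h1 h2
      refine hP (x n) (q m) w h1.le h2.le ?_
      rw [← dist_eq_norm]
      exact hcon
    have hfin : limsup (fun n => ‖x n - mid‖) atTop ≤ ρ - η :=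
      limsup_le_of_le (hcob mid) hev3
    linarith
  have hTq : Tendsto (fun m => q (m+1)) atTop (nhds (T w)) := by
    rw [tendsto_iff_dist_tendsto_zero]
    have hd0 : Tendsto (fun m => k 1 * dist (q m) w) atTop (nhds 0) := by
      have h := tendsto_iff_dist_tendsto_zero.1 hqlim
      simpa using h.const_mul (k 1)
    refine squeeze_zero (fun m => dist_nonneg) (fun m => ?_) hd0
    have h1 := hTane 1 w hwC (q m) (hqC m) (hwq m)
    have h2 : T^[1] (q m) = q (m+1) := by rw [Function.iterate_one, hqsucc m]
    calc dist (q (m+1)) (T w) = ‖T w - q (m+1)‖ := by rw [dist_comm, dist_eq_norm]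
      _ = ‖T^[1] w - T^[1] (q m)‖ := by rw [Function.iterate_one, ← hqsucc m]
      _ ≤ k 1 * ‖w - q m‖ := h1
      _ = k 1 * dist (q m) w := by rw [dist_comm, dist_eq_norm]
  have huniq : T w = w :=
    tendsto_nhds_unique hTq (hqlim.comp (tendsto_add_atTop_nat 1))
  exact ⟨w, hwC, huniq⟩


/-- **Fixed point theorem for monotone asymptotic nonexpansive mappings without
continuity, under the monotone weak-Opial condition** (Theorem 3.7 of the paper).
Let `X` be a uniformly convex partially ordered Banach space with convex closed order
intervals, satisfying the monotone weak-Opial condition.  Let `C` be a nonempty convex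
closed bounded subset not reduced to one point and `T : C → C` a monotone asymptotic
nonexpansive mapping.  Then `T` has a fixed point iff some `x₀ ∈ C` is comparable
with `T x₀`. -/
theorem fixedPoint_monotone_asymptotic_nonexpansive_opial
    {X : Type*} [NormedAddCommGroup X] [NormedSpace ℝ X] [CompleteSpace X]
    [UniformConvexSpace X] [PartialOrder X]
    (hIccUp : ∀ a : X, Convex ℝ {x : X | a ≤ x} ∧ IsClosed {x : X | a ≤ x})
    (hIccDown : ∀ b : X, Convex ℝ {x : X | x ≤ b} ∧ IsClosed {x : X | x ≤ b})
    (hOpialUp : ∀ (x : ℕ → X) (p : X), (∀ n, x n ≤ x (n + 1)) →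
      WeaklyConvergesTo x p → ∀ y : X, p ≤ y →
        limsup (fun n => ‖x n - p‖) atTop ≤ limsup (fun n => ‖x n - y‖) atTop)
    (hOpialDown : ∀ (x : ℕ → X) (p : X), (∀ n, x (n + 1) ≤ x n) →
      WeaklyConvergesTo x p → ∀ y : X, y ≤ p →
        limsup (fun n => ‖x n - p‖) atTop ≤ limsup (fun n => ‖x n - y‖) atTop)
    (C : Set X) (hCne : C.Nonempty) (hCconv : Convex ℝ C) (hCcl : IsClosed C)
    (hCbd : Bornology.IsBounded C) (hCnontriv : ∃ a ∈ C, ∃ b ∈ C, a ≠ b)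
    (T : X → X) (hTC : Set.MapsTo T C C)
    (hTmono : ∀ x ∈ C, ∀ y ∈ C, x ≤ y → T x ≤ T y)
    (k : ℕ → ℝ) (hkpos : ∀ n, 0 < k n) (hklim : Tendsto k atTop (nhds 1))
    (hTane : ∀ n : ℕ, ∀ x ∈ C, ∀ y ∈ C, (x ≤ y ∨ y ≤ x) →
      ‖T^[n] x - T^[n] y‖ ≤ k n * ‖x - y‖) :
    (∃ z ∈ C, T z = z) ↔ (∃ x₀ ∈ C, x₀ ≤ T x₀ ∨ T x₀ ≤ x₀) := by
  constructor
  · rintro ⟨z, hz, hfix⟩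
    exact ⟨z, hz, Or.inl (le_of_eq hfix.symm)⟩
  · rintro ⟨x₀, hx₀, hcase⟩
    rcases hcase with h | h
    · exact keyLemma (· ≤ ·) (fun a => le_refl a) (fun a b c => le_trans)
        (fun a b => le_antisymm) hIccUp hIccDown hOpialUp C hCconv hCcl hCbd T hTC hTmono
        k hkpos hklim (fun n a ha b hb hab => hTane n a ha b hb (Or.inl hab)) x₀ hx₀ h
    · exact keyLemma (fun a b => b ≤ a) (fun a => le_refl a)
        (fun a b c hab hbc => le_trans hbc hab) (fun a b hab hba => le_antisymm hba hab)
        (fun a => hIccDown a) (fun b => hIccUp b)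
        (fun x p hmono hweak y hy => hOpialDown x p hmono hweak y hy)
        C hCconv hCcl hCbd T hTC (fun a ha b hb hab => hTmono b hb a ha hab)
        k hkpos hklim (fun n a ha b hb hab => hTane n a ha b hb (Or.inr hab)) x₀ hx₀ h
end

section
/- Let (X, ‖·‖, ⪯) be a reflexive partially ordered Banach space in which all order intervals [a,→) = {x ∈ X : a ⪯ x} and (←,b] = {x ∈ X : x ⪯ b} are convex and closed. Then every bounded monotone increasing sequence {x_n} in X converges weakly to some x ∈ X, and moreover x_n ⪯ x for every n. -/
/-!
By reflexivity (Banach–Alaoglu in the bidual) a bounded set is relatively weakly compact, and by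
Hahn–Banach the closed convex order intervals are weakly closed. Hence every weak cluster point
`p` of the monotone sequence is its least upper bound: a tail of the sequence lies in
`[x_n, →)`, so `x_n ⪯ p`, and the whole sequence lies in `(←, b]` for every upper bound `b`,
so `p ⪯ b`. The cluster point is therefore unique, and in a compact set a sequence with a
unique cluster point converges to it.
-/

open Filter

/-- A Banach space is reflexive if the canonical embedding into its bidual is
surjective. -/
def IsReflexiveSpace (X : Type*) [NormedAddCommGroup X] [NormedSpace ℝ X] : Prop :=
  Function.Surjective (NormedSpace.inclusionInDoubleDual ℝ X)

open Set Topology Bornology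

section MonotoneClusterPt

variable {ι Y : Type*} [Preorder ι] [TopologicalSpace Y]

theorem Monotone.isLUB_of_mapClusterPt [Preorder Y] [ClosedIciTopology Y] [ClosedIicTopology Y]
    {x : ι → Y} (hx : Monotone x) {p : Y} (hp : MapClusterPt p atTop x) : IsLUB (range x) p := by
  refine ⟨?_, fun u hu => ?_⟩
  · rintro - ⟨i, rfl⟩
    exact isClosed_Ici.mem_of_mapClusterPt hp <|
      (eventually_ge_atTop i).mono fun j hij => hx hij
  · exact isClosed_Iic.mem_of_mapClusterPt hp <| .of_forall fun j => hu (mem_range_self j)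

theorem Monotone.exists_tendsto_isLUB_of_isCompact [PartialOrder Y] [ClosedIciTopology Y]
    [ClosedIicTopology Y] [IsDirectedOrder ι] [Nonempty ι] {x : ι → Y} (hx : Monotone x)
    {K : Set Y} (hK : IsCompact K) (hxK : ∀ i, x i ∈ K) :
    ∃ p, IsLUB (range x) p ∧ Tendsto x atTop (𝓝 p) := by
  obtain ⟨p, -, hp⟩ :=
    hK.exists_mapClusterPt (f := atTop) (tendsto_principal.2 (.of_forall hxK))
  have hlub := hx.isLUB_of_mapClusterPt hp
  exact ⟨p, hlub, hK.tendsto_nhds_of_unique_mapClusterPt (.of_forall hxK)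
    fun q _ hq => (hx.isLUB_of_mapClusterPt hq).unique hlub⟩

end MonotoneClusterPt

section WeakOrder

variable {𝕜 E : Type*} [RCLike 𝕜] [AddCommGroup E] [Module 𝕜 E] [Module ℝ E]
  [IsScalarTower ℝ 𝕜 E] [TopologicalSpace E] [IsTopologicalAddGroup E] [ContinuousSMul 𝕜 E] [LocallyConvexSpace ℝ E]

variable (𝕜) in
theorem Convex.isClosed_toWeakSpace_image {s : Set E} (hs : Convex ℝ s) (hcl : IsClosed s) :
    IsClosed (toWeakSpace 𝕜 E '' s) := by
  rw [← closure_eq_iff_isClosed, ← hs.toWeakSpace_closure 𝕜, hcl.closure_eq]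

instance [PartialOrder E] : PartialOrder (WeakSpace 𝕜 E) := ‹PartialOrder E›

variable (𝕜) in
theorem WeakSpace.closedIciTopology [PartialOrder E] [ClosedIciTopology E]
    (hconv : ∀ a : E, Convex ℝ (Ici a)) : ClosedIciTopology (WeakSpace 𝕜 E) :=
  ⟨fun a => by
    have := (hconv ((toWeakSpace 𝕜 E).symm a)).isClosed_toWeakSpace_image 𝕜 isClosed_Ici
    rwa [LinearEquiv.image_eq_preimage_symm] at this⟩

variable (𝕜) in
theorem WeakSpace.closedIicTopology [PartialOrder E] [ClosedIicTopology E]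
    (hconv : ∀ a : E, Convex ℝ (Iic a)) : ClosedIicTopology (WeakSpace 𝕜 E) :=
  ⟨fun a => by
    have := (hconv ((toWeakSpace 𝕜 E).symm a)).isClosed_toWeakSpace_image 𝕜 isClosed_Iic
    rwa [LinearEquiv.image_eq_preimage_symm] at this⟩

end WeakOrder

section Normed

variable {X : Type*} [NormedAddCommGroup X] [NormedSpace ℝ X]

theorem IsReflexiveSpace.isCompact_closure_toWeakSpace_image (hX : IsReflexiveSpace X)
    {s : Set X} (hs : IsBounded s) : IsCompact (closure (toWeakSpace ℝ X '' s)) := by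
  refine NormedSpace.isCompact_closure_of_isBounded ℝ X _ ?_ ?_
  · rwa [Set.preimage_image_eq s (toWeakSpace ℝ X).injective]
  · intro z _
    obtain ⟨y, hy⟩ := hX (WeakDual.toStrongDual z)
    exact ⟨toWeakSpace ℝ X y, DFunLike.ext _ _ fun f => DFunLike.congr_fun hy f⟩

theorem weaklyConvergesTo_iff_tendsto_toWeakSpace {x : ℕ → X} {p : X} :
    WeaklyConvergesTo x p ↔
      Tendsto (fun n => toWeakSpace ℝ X (x n)) atTop (𝓝 (toWeakSpace ℝ X p)) := by
  exact (WeakBilin.tendsto_iff_forall_eval_tendsto (topDualPairing ℝ X).flip fun a b h =>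
    SeparatingDual.eq_iff_forall_dual_eq.2 fun g => LinearMap.congr_fun h g).symm

end Normed

theorem bounded_monotone_weak_convergence_general
    {X : Type*} [NormedAddCommGroup X] [NormedSpace ℝ X]
    [PartialOrder X]
    (hrefl : IsReflexiveSpace X)
    (hIccUp : ∀ a : X, Convex ℝ {x : X | a ≤ x} ∧ IsClosed {x : X | a ≤ x})
    (hIccDown : ∀ b : X, Convex ℝ {x : X | x ≤ b} ∧ IsClosed {x : X | x ≤ b})
    (x : ℕ → X) (hbd : Bornology.IsBounded (Set.range x))
    (hmono : ∀ n, x n ≤ x (n + 1)) :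
    ∃ p : X, WeaklyConvergesTo x p ∧ ∀ n, x n ≤ p := by
  have : ClosedIciTopology X := ⟨fun a => (hIccUp a).2⟩
  have : ClosedIicTopology X := ⟨fun b => (hIccDown b).2⟩
  have := WeakSpace.closedIciTopology ℝ fun a => (hIccUp a).1
  have := WeakSpace.closedIicTopology ℝ fun b => (hIccDown b).1
  have hmono_weak : Monotone fun n => toWeakSpace ℝ X (x n) := monotone_nat_of_le_succ hmono
  obtain ⟨p, hlub, hlim⟩ := hmono_weak.exists_tendsto_isLUB_of_isCompact
    (hrefl.isCompact_closure_toWeakSpace_image hbd)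
    fun n => subset_closure ⟨x n, mem_range_self n, rfl⟩
  exact ⟨(toWeakSpace ℝ X).symm p, weaklyConvergesTo_iff_tendsto_toWeakSpace.2 hlim,
    fun n => hlub.1 (mem_range_self n)⟩

/-- In a reflexive partially ordered Banach space whose order intervals are convex and
closed, every bounded monotone increasing sequence converges weakly to some `x`,
and `x_n ≤ x` for every `n`. -/
theorem bounded_monotone_weak_convergence
    {X : Type*} [NormedAddCommGroup X] [NormedSpace ℝ X] [CompleteSpace X]
    [PartialOrder X]
    (hrefl : IsReflexiveSpace X)
    (hIccUp : ∀ a : X, Convex ℝ {x : X | a ≤ x} ∧ IsClosed {x : X | a ≤ x})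
    (hIccDown : ∀ b : X, Convex ℝ {x : X | x ≤ b} ∧ IsClosed {x : X | x ≤ b})
    (x : ℕ → X) (hbd : Bornology.IsBounded (Set.range x))
    (hmono : ∀ n, x n ≤ x (n + 1)) :
    ∃ p : X, WeaklyConvergesTo x p ∧ ∀ n, x n ≤ p :=
  bounded_monotone_weak_convergence_general hrefl hIccUp hIccDown x hbd hmono
end

section
/- Let (X, ‖·‖, ⪯) be a reflexive partially ordered Banach space in which all order intervals [a,→) = {x ∈ X : a ⪯ x} are convex and closed, let C be a nonempty convex closed bounded subset of X, and let T : C → C be a monotone mapping. If x₀ ∈ C satisfies x₀ ⪯ T(x₀), then the set C_∞ = {x ∈ C : T^n(x₀) ⪯ x for all n ≥ 0} is nonempty, and T maps C_∞ into itself. -/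
open Filter

/-!
The sets `D n = C ∩ [Tⁿ x₀, →)` are closed, convex, bounded and nonempty (they contain `Tⁿ x₀`),
and they decrease because the orbit of `x₀` is increasing. Convex closed sets are weakly closed and,
by reflexivity, bounded ones lie in a weakly compact ball, so Cantor's intersection theorem in the
weak topology gives a point of `⋂ n, D n = C_∞`. Invariance is pure order theory:
`Tⁿ x₀ ≤ Tⁿ⁺¹ x₀ = T (Tⁿ x₀) ≤ T x` for `x ∈ C_∞`.
-/

open Set Metric NormedSpace

section Order

variable {α : Type*} [Preorder α] {T : α → α} {C : Set α} {x₀ : α}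

theorem MonotoneOn.monotone_iterate_of_le_map (hT : MonotoneOn T C) (hTC : MapsTo T C C)
    (hx₀ : x₀ ∈ C) (hx₀T : x₀ ≤ T x₀) : Monotone fun n => T^[n] x₀ := by
  refine monotone_nat_of_le_succ fun n => ?_
  induction n with
  | zero => simpa using hx₀T
  | succ n ih =>
    rw [Function.iterate_succ_apply' T n, Function.iterate_succ_apply' T (n + 1)]
    exact hT (hTC.iterate n hx₀) (hTC.iterate (n + 1) hx₀) ih

theorem MonotoneOn.mapsTo_setOf_iterate_le (hT : MonotoneOn T C) (hTC : MapsTo T C C)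
    (hx₀ : x₀ ∈ C) (hx₀T : x₀ ≤ T x₀) :
    MapsTo T {x ∈ C | ∀ n : ℕ, T^[n] x₀ ≤ x} {x ∈ C | ∀ n : ℕ, T^[n] x₀ ≤ x} := by
  rintro x ⟨hxC, hx⟩
  refine ⟨hTC hxC, fun n => ?_⟩
  calc T^[n] x₀ ≤ T^[n + 1] x₀ := hT.monotone_iterate_of_le_map hTC hx₀ hx₀T n.le_succ
    _ = T (T^[n] x₀) := Function.iterate_succ_apply' T n x₀
    _ ≤ T x := hT (hTC.iterate n hx₀) hxC (hx n)

end Order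

theorem Convex.isClosed_toWeakSpace_image_s8 {E : Type*} [AddCommGroup E] [Module ℝ E]
    [TopologicalSpace E] [IsTopologicalAddGroup E] [ContinuousSMul ℝ E] [LocallyConvexSpace ℝ E]
    {s : Set E} (hconv : Convex ℝ s) (hcl : IsClosed s) :
    IsClosed (toWeakSpace ℝ E '' s) := by
  rw [← closure_eq_iff_isClosed, ← hconv.toWeakSpace_closure ℝ, hcl.closure_eq]

namespace IsReflexiveSpace

variable {X : Type*} [NormedAddCommGroup X] [NormedSpace ℝ X]

/-- Kakutani's theorem, one direction: the ball is the image of the weak-* compact ball of the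
bidual under the inverse of the canonical isometry, which is weak-*-to-weak continuous. -/
theorem isCompact_toWeakSpace_closedBall (hX : IsReflexiveSpace X) (r : ℝ) :
    IsCompact (toWeakSpace ℝ X '' closedBall (0 : X) r) := by
  let J : X ≃ₗᵢ[ℝ] StrongDual ℝ (StrongDual ℝ X) :=
    LinearIsometryEquiv.ofSurjective (inclusionInDoubleDualLi ℝ) hX
  let g : WeakDual ℝ (StrongDual ℝ X) → WeakSpace ℝ X :=
    fun ψ => toWeakSpace ℝ X (J.symm (WeakDual.toStrongDual ψ))
  have hg : Continuous g := by
    refine WeakBilin.continuous_of_continuous_eval _ fun f => ?_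
    have hJ : ∀ ψ : StrongDual ℝ (StrongDual ℝ X), f (J.symm ψ) = ψ f := fun ψ =>
      congrArg (fun φ : StrongDual ℝ (StrongDual ℝ X) => φ f) (J.apply_symm_apply ψ)
    exact (WeakDual.eval_continuous f).congr fun ψ => (hJ _).symm
  have himage : g '' (WeakDual.toStrongDual ⁻¹' closedBall 0 r) =
      toWeakSpace ℝ X '' closedBall (0 : X) r := by
    rw [show g = toWeakSpace ℝ X ∘ J.symm ∘ WeakDual.toStrongDual from rfl, image_comp,
      image_comp, image_preimage_eq _ WeakDual.toStrongDual.surjective,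
      LinearIsometryEquiv.image_closedBall, LinearIsometryEquiv.map_zero]
  exact himage ▸ (WeakDual.isCompact_closedBall 0 r).image hg

theorem nonempty_iInter_of_antitone (hX : IsReflexiveSpace X) {s : ℕ → Set X} (hs : Antitone s)
    (hne : ∀ n, (s n).Nonempty) (hconv : ∀ n, Convex ℝ (s n)) (hcl : ∀ n, IsClosed (s n))
    (hbd : Bornology.IsBounded (s 0)) : (⋂ n, s n).Nonempty := by
  obtain ⟨r, hr⟩ := (isBounded_iff_subset_closedBall (0 : X)).mp hbd
  have hweak_cl : ∀ n, IsClosed (toWeakSpace ℝ X '' s n) := fun n =>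
    (hconv n).isClosed_toWeakSpace_image_s8 (hcl n)
  have hweak_cpt : IsCompact (toWeakSpace ℝ X '' s 0) :=
    (hX.isCompact_toWeakSpace_closedBall r).of_isClosed_subset (hweak_cl 0) (image_mono hr)
  have hweak := hweak_cpt.nonempty_iInter_of_sequence_nonempty_isCompact_isClosed _
    (fun n => image_mono (hs n.le_succ)) (fun n => (hne n).image _) hweak_cl
  rwa [← image_iInter (toWeakSpace ℝ X).bijective, image_nonempty] at hweak

end IsReflexiveSpace

theorem Cinfty_nonempty_and_invariant_general
    {X : Type*} [NormedAddCommGroup X] [NormedSpace ℝ X]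
    [PartialOrder X]
    (hrefl : IsReflexiveSpace X)
    (hIccUp : ∀ a : X, Convex ℝ {x : X | a ≤ x} ∧ IsClosed {x : X | a ≤ x})
    (C : Set X) (hCconv : Convex ℝ C) (hCcl : IsClosed C)
    (hCbd : Bornology.IsBounded C)
    (T : X → X) (hTC : Set.MapsTo T C C)
    (hTmono : ∀ x ∈ C, ∀ y ∈ C, x ≤ y → T x ≤ T y)
    (x₀ : X) (hx₀ : x₀ ∈ C) (hx₀T : x₀ ≤ T x₀) :
    ({x ∈ C | ∀ n : ℕ, T^[n] x₀ ≤ x}).Nonempty ∧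
      Set.MapsTo T {x ∈ C | ∀ n : ℕ, T^[n] x₀ ≤ x} {x ∈ C | ∀ n : ℕ, T^[n] x₀ ≤ x} := by
  have hT : MonotoneOn T C := hTmono
  have horbit := hT.monotone_iterate_of_le_map hTC hx₀ hx₀T
  have hD : (⋂ n, C ∩ {x | T^[n] x₀ ≤ x}).Nonempty :=
    hrefl.nonempty_iInter_of_antitone
      (fun m n hmn x hx => ⟨hx.1, (horbit hmn).trans hx.2⟩)
      (fun n => ⟨_, hTC.iterate n hx₀, le_rfl⟩)
      (fun n => hCconv.inter (hIccUp _).1) (fun n => hCcl.inter (hIccUp _).2)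
      (hCbd.subset inter_subset_left)
  obtain ⟨x, hx⟩ := hD
  rw [mem_iInter] at hx
  exact ⟨⟨x, (hx 0).1, fun n => (hx n).2⟩, hT.mapsTo_setOf_iterate_le hTC hx₀ hx₀T⟩

/-- Let `X` be a reflexive partially ordered Banach space whose upward order intervals
`[a,→)` are convex and closed, `C` a nonempty convex closed bounded subset of `X`,
and `T : C → C` a monotone mapping.  If `x₀ ∈ C` satisfies `x₀ ≤ T x₀`, then the set
`C_∞ = {x ∈ C : T^[n] x₀ ≤ x for all n}` is nonempty and `T`-invariant. -/
theorem Cinfty_nonempty_and_invariant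
    {X : Type*} [NormedAddCommGroup X] [NormedSpace ℝ X] [CompleteSpace X]
    [PartialOrder X]
    (hrefl : IsReflexiveSpace X)
    (hIccUp : ∀ a : X, Convex ℝ {x : X | a ≤ x} ∧ IsClosed {x : X | a ≤ x})
    (C : Set X) (hCne : C.Nonempty) (hCconv : Convex ℝ C) (hCcl : IsClosed C)
    (hCbd : Bornology.IsBounded C)
    (T : X → X) (hTC : Set.MapsTo T C C)
    (hTmono : ∀ x ∈ C, ∀ y ∈ C, x ≤ y → T x ≤ T y)
    (x₀ : X) (hx₀ : x₀ ∈ C) (hx₀T : x₀ ≤ T x₀) :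
    ({x ∈ C | ∀ n : ℕ, T^[n] x₀ ≤ x}).Nonempty ∧
      Set.MapsTo T {x ∈ C | ∀ n : ℕ, T^[n] x₀ ≤ x} {x ∈ C | ∀ n : ℕ, T^[n] x₀ ≤ x} :=
  Cinfty_nonempty_and_invariant_general hrefl hIccUp C hCconv hCcl hCbd T hTC hTmono x₀ hx₀ hx₀T
end

section
/- Let (X, ‖·‖, ⪯) be a uniformly convex partially ordered Banach space in which all order intervals are convex and closed, let C be a nonempty convex closed bounded subset of X, and let T : C → C be a monotone asymptotic nonexpansive mapping with constants {k_p}. Suppose x₀ ∈ C satisfies x₀ ⪯ T(x₀), let C_∞ = {x ∈ C : T^n(x₀) ⪯ x for all n ≥ 0} (which is nonempty, closed, convex, and T-invariant), let τ(x) = limsup_{n→∞} ‖T^n(x₀) − x‖ for x ∈ C_∞, and let z ∈ C_∞ be the unique minimizer of τ on C_∞ with τ(z) = τ₀. Then τ₀ ≤ τ(T^p(z)) ≤ k_p τ₀ for every p, so {T^p(z)} is a minimizing sequence of τ, and consequently {T^p(z)} converges strongly (in norm) to z. -/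
open Filter

/-- Uniform convexity with a uniform modulus over all radii `r ≤ r₀`. -/
lemma unif_convex_radius_aux {X : Type*} [NormedAddCommGroup X] [NormedSpace ℝ X]
    [UniformConvexSpace X] {ε r₀ : ℝ} (hε : 0 < ε) (hr₀ : 0 < r₀) :
    ∃ δ > 0, ∀ r : ℝ, r ≤ r₀ → ∀ x y : X, ‖x‖ ≤ r → ‖y‖ ≤ r → ε ≤ ‖x - y‖ →
      ‖x + y‖ ≤ 2 * r - δ := by
  obtain ⟨δ₁, hδ₁, h₁⟩ :=
    exists_forall_closed_ball_dist_add_le_two_sub X (div_pos hε hr₀)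
  refine ⟨δ₁ * (ε / 2), by positivity, fun r hr x y hx hy hxy => ?_⟩
  have hr2 : ε ≤ 2 * r := by
    calc ε ≤ ‖x - y‖ := hxy
    _ ≤ ‖x‖ + ‖y‖ := norm_sub_le _ _
    _ ≤ 2 * r := by linarith
  have hrpos : 0 < r := by linarith
  have hx' : ‖r⁻¹ • x‖ ≤ 1 := by
    rw [norm_smul, Real.norm_eq_abs, abs_of_pos (by positivity)]
    rw [inv_mul_le_iff₀ hrpos]; simpa using hx
  have hy' : ‖r⁻¹ • y‖ ≤ 1 := by
    rw [norm_smul, Real.norm_eq_abs, abs_of_pos (by positivity)]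
    rw [inv_mul_le_iff₀ hrpos]; simpa using hy
  have hxy' : ε / r₀ ≤ ‖r⁻¹ • x - r⁻¹ • y‖ := by
    rw [← smul_sub, norm_smul, Real.norm_eq_abs, abs_of_pos (by positivity)]
    rw [div_le_iff₀ hr₀]
    calc ε = (ε / r) * r := by field_simp
    _ ≤ (r⁻¹ * ‖x - y‖) * r₀ := by
        apply mul_le_mul _ hr (le_of_lt hrpos) (by positivity)
        rw [div_eq_inv_mul]
        exact mul_le_mul_of_nonneg_left hxy (by positivity)
  have := h₁ hx' hy' hxy'
  rw [← smul_add, norm_smul, Real.norm_eq_abs, abs_of_pos (by positivity),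
    inv_mul_le_iff₀ hrpos] at this
  calc ‖x + y‖ ≤ r * (2 - δ₁) := this
  _ ≤ 2 * r - δ₁ * (ε / 2) := by nlinarith

/-- Key step in the proof of the main theorem.  Let `X` be a uniformly convex partially
ordered Banach space with convex closed order intervals, `C` a nonempty convex closed
bounded subset, and `T : C → C` a monotone asymptotic nonexpansive mapping with
constants `k_p`.  Suppose `x₀ ∈ C` satisfies `x₀ ≤ T x₀`, let
`C_∞ = {x ∈ C : T^[n] x₀ ≤ x for all n}` (nonempty, closed, convex and `T`-invariant),
let `τ x = limsup_n ‖T^[n] x₀ - x‖` and let `z ∈ C_∞` be the unique minimizer of `τ`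
on `C_∞`, with `τ z = τ₀`.  Then `τ₀ ≤ τ (T^[p] z) ≤ k_p * τ₀` for every `p`, so
`T^[p] z` is a minimizing sequence of `τ`, and `T^[p] z → z` strongly. -/
theorem orbit_of_minimizer_is_minimizing_and_converges
    {X : Type*} [NormedAddCommGroup X] [NormedSpace ℝ X] [CompleteSpace X]
    [UniformConvexSpace X] [PartialOrder X]
    (hIccUp : ∀ a : X, Convex ℝ {x : X | a ≤ x} ∧ IsClosed {x : X | a ≤ x})
    (hIccDown : ∀ b : X, Convex ℝ {x : X | x ≤ b} ∧ IsClosed {x : X | x ≤ b})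
    (C : Set X) (hCne : C.Nonempty) (hCconv : Convex ℝ C) (hCcl : IsClosed C)
    (hCbd : Bornology.IsBounded C)
    (T : X → X) (hTC : Set.MapsTo T C C)
    (hTmono : ∀ x ∈ C, ∀ y ∈ C, x ≤ y → T x ≤ T y)
    (k : ℕ → ℝ) (hkpos : ∀ p, 0 < k p) (hklim : Tendsto k atTop (nhds 1))
    (hTane : ∀ p : ℕ, ∀ x ∈ C, ∀ y ∈ C, (x ≤ y ∨ y ≤ x) →
      ‖T^[p] x - T^[p] y‖ ≤ k p * ‖x - y‖)
    (x₀ : X) (hx₀ : x₀ ∈ C) (hx₀T : x₀ ≤ T x₀)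
    (Cinf : Set X) (hCinf : Cinf = {x ∈ C | ∀ n : ℕ, T^[n] x₀ ≤ x})
    (hCinfne : Cinf.Nonempty) (hCinfcl : IsClosed Cinf) (hCinfconv : Convex ℝ Cinf)
    (hCinfinv : Set.MapsTo T Cinf Cinf)
    (τ : X → ℝ) (hτ : ∀ x, τ x = limsup (fun n => ‖T^[n] x₀ - x‖) atTop)
    (τ₀ : ℝ) (hτ₀ : τ₀ = sInf (τ '' Cinf))
    (z : X) (hz : z ∈ Cinf) (hzmin : τ z = τ₀)
    (hzuniq : ∀ w ∈ Cinf, τ w = τ₀ → w = z) :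
    (∀ p : ℕ, τ₀ ≤ τ (T^[p] z) ∧ τ (T^[p] z) ≤ k p * τ₀) ∧
      Tendsto (fun p => τ (T^[p] z)) atTop (nhds τ₀) ∧
      Tendsto (fun p => T^[p] z) atTop (nhds z) := by
  obtain ⟨R, hR⟩ := hCbd.subset_closedBall 0
  have hyC : ∀ n, T^[n] x₀ ∈ C := by
    intro n
    induction n with
    | zero => simpa using hx₀
    | succ n ih => rw [Function.iterate_succ_apply']; exact hTC ih
  have hCnorm : ∀ x ∈ C, ‖x‖ ≤ R := fun x hx => by
    simpa using hR hx
  have hz' := hz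
  rw [hCinf] at hz'
  obtain ⟨hzC, hzle⟩ := hz'
  have hbdd : ∀ x : X, IsBoundedUnder (· ≤ ·) atTop (fun n => ‖T^[n] x₀ - x‖) := by
    intro x
    refine isBoundedUnder_of ⟨R + ‖x‖, fun n => ?_⟩
    calc ‖T^[n] x₀ - x‖ ≤ ‖T^[n] x₀‖ + ‖x‖ := norm_sub_le _ _
    _ ≤ R + ‖x‖ := by have := hCnorm _ (hyC n); linarith
  have hcobdd : ∀ x : X, IsCoboundedUnder (· ≤ ·) atTop (fun n => ‖T^[n] x₀ - x‖) :=
    fun x => isCoboundedUnder_le_of_le atTop (fun n => norm_nonneg _)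
  have hτ0 : ∀ x : X, 0 ≤ τ x := fun x => by
    rw [hτ]
    exact le_limsup_of_frequently_le (Frequently.of_forall fun n => norm_nonneg _) (hbdd x)
  have hτ₀le : ∀ w ∈ Cinf, τ₀ ≤ τ w := by
    intro w hw
    rw [hτ₀]
    refine csInf_le ⟨0, ?_⟩ ⟨w, hw, rfl⟩
    rintro a ⟨u, -, rfl⟩
    exact hτ0 u
  have hwCinf : ∀ p, T^[p] z ∈ Cinf := by
    intro p
    induction p with
    | zero => simpa using hz
    | succ p ih => rw [Function.iterate_succ_apply']; exact hCinfinv ih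
  have hτ₀nonneg : 0 ≤ τ₀ := hzmin ▸ hτ0 z
  have lower : ∀ p, τ₀ ≤ τ (T^[p] z) := fun p => hτ₀le _ (hwCinf p)
  have upper : ∀ p, τ (T^[p] z) ≤ k p * τ₀ := by
    intro p
    refine le_of_forall_pos_le_add fun ε hε => ?_
    set s := ε / k p with hs
    have hspos : 0 < s := div_pos hε (hkpos p)
    have hlt : limsup (fun n => ‖T^[n] x₀ - z‖) atTop < τ₀ + s := by
      rw [← hτ z, hzmin]; linarith
    have hev : ∀ᶠ n in atTop, ‖T^[n] x₀ - z‖ < τ₀ + s :=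
      eventually_lt_of_limsup_lt hlt (hbdd z)
    have key : ∀ᶠ n in atTop, ‖T^[n + p] x₀ - T^[p] z‖ ≤ k p * (τ₀ + s) := by
      filter_upwards [hev] with n hn
      have h1 : T^[n + p] x₀ = T^[p] (T^[n] x₀) := by
        rw [add_comm, Function.iterate_add_apply]
      rw [h1]
      calc ‖T^[p] (T^[n] x₀) - T^[p] z‖ ≤ k p * ‖T^[n] x₀ - z‖ :=
          hTane p _ (hyC n) z hzC (Or.inl (hzle n))
      _ ≤ k p * (τ₀ + s) := mul_le_mul_of_nonneg_left hn.le (hkpos p).le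
    have hls : limsup (fun n => ‖T^[n + p] x₀ - T^[p] z‖) atTop ≤ k p * (τ₀ + s) :=
      limsup_le_of_le (isCoboundedUnder_le_of_le atTop (fun n => norm_nonneg _)) key
    rw [hτ (T^[p] z), ← limsup_nat_add (fun n => ‖T^[n] x₀ - T^[p] z‖) p]
    calc limsup (fun n => ‖T^[n + p] x₀ - T^[p] z‖) atTop ≤ k p * (τ₀ + s) := hls
    _ = k p * τ₀ + ε := by
        rw [hs, mul_add, mul_div_cancel₀ _ (ne_of_gt (hkpos p))]
  have htend : Tendsto (fun p => τ (T^[p] z)) atTop (nhds τ₀) := by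
    have h1 : Tendsto (fun p => k p * τ₀) atTop (nhds τ₀) := by
      have := hklim.mul_const τ₀
      rwa [one_mul] at this
    exact tendsto_of_tendsto_of_tendsto_of_le_of_le tendsto_const_nhds h1 lower upper
  refine ⟨fun p => ⟨lower p, upper p⟩, htend, ?_⟩
  apply Metric.tendsto_nhds.2
  intro ε hε
  obtain ⟨δ, hδ, hδ'⟩ := unif_convex_radius_aux (X := X) hε
    (show (0:ℝ) < τ₀ + 1 by linarith)
  set s := min 1 (δ / 4) with hs
  have hspos : 0 < s := lt_min one_pos (by positivity)
  have hs1 : s ≤ 1 := min_le_left _ _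
  have hs4 : s ≤ δ / 4 := min_le_right _ _
  have hev : ∀ᶠ p in atTop, τ (T^[p] z) < τ₀ + s :=
    htend.eventually_lt_const (by linarith)
  filter_upwards [hev] with p hp
  by_contra hcon
  push_neg at hcon
  rw [dist_eq_norm] at hcon
  have h1 : ∀ᶠ n in atTop, ‖T^[n] x₀ - T^[p] z‖ < τ₀ + s := by
    apply eventually_lt_of_limsup_lt _ (hbdd _)
    rw [← hτ]; exact hp
  have h2 : ∀ᶠ n in atTop, ‖T^[n] x₀ - z‖ < τ₀ + s := by
    apply eventually_lt_of_limsup_lt _ (hbdd z)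
    rw [← hτ, hzmin]; linarith
  set m := (1/2 : ℝ) • T^[p] z + (1/2 : ℝ) • z with hm
  have hmCinf : m ∈ Cinf :=
    hCinfconv (hwCinf p) hz (by norm_num) (by norm_num) (by norm_num)
  have h3 : ∀ᶠ n in atTop, ‖T^[n] x₀ - m‖ ≤ (τ₀ + s) - δ / 2 := by
    filter_upwards [h1, h2] with n hn1 hn2
    have hd : ε ≤ ‖(T^[n] x₀ - T^[p] z) - (T^[n] x₀ - z)‖ := by
      have heq : (T^[n] x₀ - T^[p] z) - (T^[n] x₀ - z) = z - T^[p] z := by abel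
      rw [heq, norm_sub_rev]
      exact hcon
    have hkey := hδ' (τ₀ + s) (by linarith) _ _ hn1.le hn2.le hd
    have hsum : (T^[n] x₀ - T^[p] z) + (T^[n] x₀ - z) = (2:ℝ) • (T^[n] x₀ - m) := by
      rw [hm]; module
    rw [hsum, norm_smul, Real.norm_eq_abs] at hkey
    rw [show |(2:ℝ)| = 2 by norm_num] at hkey
    linarith
  have h4 : τ m ≤ (τ₀ + s) - δ / 2 := by
    rw [hτ]
    exact limsup_le_of_le (hcobdd m) h3
  have h5 : τ₀ ≤ τ m := hτ₀le m hmCinf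
  linarith
end
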